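/- arXiv:2007.06088 — 9 statements merged into one kernel-verified Lean document; each statement's English description precedes it below -/
import Mathlib

section
/- Proposition 3.1 (uniform exponential decay for the perturbed cocycles): There exist ε₀ > 0, D' > 0 and λ' > 0 such that for every ε ∈ I with |ε| ≤ ε₀, every ω ∈ Ω', every n ∈ ℕ and every h ∈ B_s⁰, one has ‖L_{ω,ε}ⁿ h‖_s ≤ D' e^{−λ'n} ‖h‖_s. -/
open MeasureTheory Filter Topology
noncomputable section

/-- The cocycle of operators:
`iterOp σ L ε n ω = L (σ^[n-1] ω) ε ∘ ⋯ ∘ L (σ ω) ε ∘ L ω ε`. -/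
def iterOp {Ω B : Type*} [NormedAddCommGroup B] [NormedSpace ℝ B]
    (σ : Ω → Ω) (L : Ω → ℝ → (B →L[ℝ] B)) (ε : ℝ) : ℕ → Ω → (B →L[ℝ] B)
  | 0, _ => ContinuousLinearMap.id ℝ B
  | n + 1, ω => iterOp σ L ε n (σ ω) ∘L L ω ε

lemma iterOp_succ_left {Ω B : Type*} [NormedAddCommGroup B] [NormedSpace ℝ B]
    (σ : Ω → Ω) (L : Ω → ℝ → (B →L[ℝ] B)) (ε : ℝ) (n : ℕ) (ω : Ω) :
    iterOp σ L ε (n+1) ω = L (σ^[n] ω) ε ∘L iterOp σ L ε n ω := by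
  induction n generalizing ω with
  | zero => simp [iterOp]
  | succ n ih =>
      show iterOp σ L ε (n+1) (σ ω) ∘L L ω ε = _
      rw [ih, ContinuousLinearMap.comp_assoc, ← Function.iterate_succ_apply]
      rfl

lemma iterOp_add {Ω B : Type*} [NormedAddCommGroup B] [NormedSpace ℝ B]
    (σ : Ω → Ω) (L : Ω → ℝ → (B →L[ℝ] B)) (ε : ℝ) (m n : ℕ) (ω : Ω) :
    iterOp σ L ε (m + n) ω = iterOp σ L ε n (σ^[m] ω) ∘L iterOp σ L ε m ω := by
  induction n with
  | zero => simp [iterOp]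
  | succ n ih =>
      rw [show m + (n+1) = (m+n)+1 from rfl, iterOp_succ_left, ih, iterOp_succ_left,
        ContinuousLinearMap.comp_assoc]
      congr 2
      rw [← Function.iterate_add_apply, Nat.add_comm m n]

lemma iterOp_compat {Ω Bs Bw : Type*} [NormedAddCommGroup Bs] [NormedSpace ℝ Bs]
    [NormedAddCommGroup Bw] [NormedSpace ℝ Bw]
    (σ : Ω → Ω) (L : Ω → ℝ → (Bs →L[ℝ] Bs)) (Lw : Ω → ℝ → (Bw →L[ℝ] Bw))
    (ιw : Bs →ₗ[ℝ] Bw)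
    (hcompat : ∀ (ω : Ω) (ε : ℝ) (h : Bs), ιw (L ω ε h) = Lw ω ε (ιw h))
    (ε : ℝ) (n : ℕ) (ω : Ω) (h : Bs) :
    ιw (iterOp σ L ε n ω h) = iterOp σ Lw ε n ω (ιw h) := by
  induction n generalizing ω h with
  | zero => rfl
  | succ n ih =>
      show ιw (iterOp σ L ε n (σ ω) (L ω ε h)) = iterOp σ Lw ε n (σ ω) (Lw ω ε (ιw h))
      rw [ih, hcompat]

theorem stmt_0
    {Ω : Type*} [MeasurableSpace Ω] (P : Measure Ω) [IsProbabilityMeasure P]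
    (σ σinv : Ω → Ω)
    (hσinv₁ : Function.LeftInverse σinv σ) (hσinv₂ : Function.RightInverse σinv σ)
    (hσinvmeas : Measurable σinv)
    (hσerg : Ergodic σ P)
    {Bs Bw : Type*}
    [NormedAddCommGroup Bs] [NormedSpace ℝ Bs] [CompleteSpace Bs]
    [NormedAddCommGroup Bw] [NormedSpace ℝ Bw] [CompleteSpace Bw]
    [MeasurableSpace Bs] [BorelSpace Bs]
    (ιw : Bs →ₗ[ℝ] Bw) (hιw_inj : Function.Injective ιw)
    (hιw_norm : ∀ h : Bs, ‖ιw h‖ ≤ ‖h‖)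
    (ψ : Bw →L[ℝ] ℝ) (hψ_ne : ∃ g : Bs, ψ (ιw g) ≠ 0)
    (I : Set ℝ) (hI : I ∈ nhds (0 : ℝ))
    (L : Ω → ℝ → (Bs →L[ℝ] Bs)) (Lw : Ω → ℝ → (Bw →L[ℝ] Bw))
    (hcompat : ∀ (ω : Ω) (ε : ℝ) (h : Bs), ιw (L ω ε h) = Lw ω ε (ιw h))
    (hmeas : ∀ ε ∈ I, ∀ h : Bs, Measurable fun ω => L ω ε h)
    (D lam C lam1 : ℝ) (hD : 0 < D) (hlam : 0 < lam) (hC : 0 < C)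
    (hlam1 : lam1 ∈ Set.Ioo (0 : ℝ) 1)
    (Ω' : Set Ω) (hΩ'meas : MeasurableSet Ω') (hΩ'full : P Ω' = 1)
    (hΩ'inv : ∀ ω, ω ∈ Ω' ↔ σ ω ∈ Ω')
    (hdec : ∀ ω ∈ Ω', ∀ n : ℕ, ∀ h : Bs, ψ (ιw h) = 0 →
      ‖iterOp σ L 0 n ω h‖ ≤ D * Real.exp (-lam * n) * ‖h‖)
    (h1 : ∀ ε ∈ I, ∀ ω ∈ Ω', ∀ n : ℕ, ∀ h : Bs,
      ‖iterOp σ L ε n ω h‖ ≤ C * lam1 ^ n * ‖h‖ + C * ‖ιw h‖)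
    (h2 : ∀ ε ∈ I, ∀ ω ∈ Ω', ∀ h : Bs,
      ‖ιw (L ω ε h) - ιw (L ω 0 h)‖ ≤ C * |ε| * ‖h‖)
    (h3 : ∀ ε ∈ I, ∀ ω ∈ Ω', ∀ n : ℕ, ‖iterOp σ Lw ε n ω‖ ≤ C)
    (h4 : ∀ ε ∈ I, ∀ ω ∈ Ω', ∀ h : Bs, ψ (ιw (L ω ε h)) = ψ (ιw h))
    :
    ∃ ε₀ > (0 : ℝ), ∃ D' > (0 : ℝ), ∃ lam' > (0 : ℝ),
      ∀ ε ∈ I, |ε| ≤ ε₀ → ∀ ω ∈ Ω', ∀ n : ℕ, ∀ h : Bs, ψ (ιw h) = 0 →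
        ‖iterOp σ L ε n ω h‖ ≤ D' * Real.exp (-lam' * n) * ‖h‖ := by
  have h0I : (0:ℝ) ∈ I := mem_of_mem_nhds hI
  obtain ⟨hlam1pos, hlam1lt⟩ := hlam1
  have hΩiter : ∀ (k : ℕ) (ω : Ω), ω ∈ Ω' → σ^[k] ω ∈ Ω' := by
    intro k
    induction k with
    | zero => intro ω hω; exact hω
    | succ k ih =>
        intro ω hω
        rw [Function.iterate_succ_apply]
        exact ih _ ((hΩ'inv ω).1 hω)
  -- uniform bound on strong cocycle
  have hbound : ∀ ε ∈ I, ∀ ω ∈ Ω', ∀ (n : ℕ) (h : Bs),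
      ‖iterOp σ L ε n ω h‖ ≤ 2*C*‖h‖ := by
    intro ε hε ω hω n h
    calc ‖iterOp σ L ε n ω h‖ ≤ C * lam1^n * ‖h‖ + C * ‖ιw h‖ := h1 ε hε ω hω n h
      _ ≤ C * 1 * ‖h‖ + C * ‖h‖ := by
          gcongr
          · exact pow_le_one₀ hlam1pos.le hlam1lt.le
          · exact hιw_norm h
      _ = 2*C*‖h‖ := by ring
  -- kernel preservation
  have hker : ∀ ε ∈ I, ∀ (n : ℕ) (ω : Ω), ω ∈ Ω' → ∀ h : Bs,
      ψ (ιw (iterOp σ L ε n ω h)) = ψ (ιw h) := by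
    intro ε hε n
    induction n with
    | zero => intro ω hω h; rfl
    | succ n ih =>
        intro ω hω h
        show ψ (ιw (iterOp σ L ε n (σ ω) (L ω ε h))) = ψ (ιw h)
        rw [ih (σ ω) ((hΩ'inv ω).1 hω), h4 ε hε ω hω]
  set K : ℝ := 2*C^3 with hK
  have hKpos : 0 < K := by positivity
  -- telescoping bound
  have htel : ∀ ε ∈ I, ∀ (h : Bs) (n m : ℕ) (ω : Ω), ω ∈ Ω' →
      ‖iterOp σ Lw ε m (σ^[n] ω) (ιw (iterOp σ L ε n ω h) - ιw (iterOp σ L 0 n ω h))‖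
        ≤ n * (K * |ε| * ‖h‖) := by
    intro ε hε h n
    induction n with
    | zero => intro m ω hω; simp [iterOp]
    | succ n ih =>
        intro m ω hω
        have hωn : σ^[n] ω ∈ Ω' := hΩiter n ω hω
        have hstep : ∀ δ : ℝ, iterOp σ L δ (n+1) ω h = L (σ^[n] ω) δ (iterOp σ L δ n ω h) := by
          intro δ; rw [iterOp_succ_left]; rfl
        have hdecomp :
            ιw (iterOp σ L ε (n+1) ω h) - ιw (iterOp σ L 0 (n+1) ω h)
              = Lw (σ^[n] ω) ε (ιw (iterOp σ L ε n ω h) - ιw (iterOp σ L 0 n ω h))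
                + (ιw (L (σ^[n] ω) ε (iterOp σ L 0 n ω h))
                    - ιw (L (σ^[n] ω) 0 (iterOp σ L 0 n ω h))) := by
          rw [hstep ε, hstep 0, map_sub, ← hcompat, ← hcompat]
          abel
        rw [hdecomp, map_add]
        have e1 : iterOp σ Lw ε m (σ^[n+1] ω)
              (Lw (σ^[n] ω) ε (ιw (iterOp σ L ε n ω h) - ιw (iterOp σ L 0 n ω h)))
            = iterOp σ Lw ε (m+1) (σ^[n] ω)
              (ιw (iterOp σ L ε n ω h) - ιw (iterOp σ L 0 n ω h)) := by
          rw [Function.iterate_succ_apply']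
          rfl
        have hv : ‖ιw (L (σ^[n] ω) ε (iterOp σ L 0 n ω h))
              - ιw (L (σ^[n] ω) 0 (iterOp σ L 0 n ω h))‖ ≤ C * |ε| * (2*C*‖h‖) := by
          refine le_trans (h2 ε hε _ hωn _)
            (mul_le_mul_of_nonneg_left (hbound 0 h0I ω hω n h) (by positivity))
        calc ‖iterOp σ Lw ε m (σ^[n+1] ω)
                (Lw (σ^[n] ω) ε (ιw (iterOp σ L ε n ω h) - ιw (iterOp σ L 0 n ω h)))
              + iterOp σ Lw ε m (σ^[n+1] ω)
                (ιw (L (σ^[n] ω) ε (iterOp σ L 0 n ω h))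
                  - ιw (L (σ^[n] ω) 0 (iterOp σ L 0 n ω h)))‖
            ≤ ‖iterOp σ Lw ε m (σ^[n+1] ω)
                (Lw (σ^[n] ω) ε (ιw (iterOp σ L ε n ω h) - ιw (iterOp σ L 0 n ω h)))‖
              + ‖iterOp σ Lw ε m (σ^[n+1] ω)
                (ιw (L (σ^[n] ω) ε (iterOp σ L 0 n ω h))
                  - ιw (L (σ^[n] ω) 0 (iterOp σ L 0 n ω h)))‖ := norm_add_le _ _
          _ ≤ n * (K * |ε| * ‖h‖) + C * (C * |ε| * (2*C*‖h‖)) := by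
              refine add_le_add ?_ ?_
              · rw [e1]; exact ih (m+1) ω hω
              · refine le_trans (ContinuousLinearMap.le_of_opNorm_le _
                  (h3 ε hε _ (hΩiter (n+1) ω hω) m) _) ?_
                gcongr
          _ = (↑(n+1)) * (K * |ε| * ‖h‖) := by push_cast [hK]; ring
  -- choice of N
  obtain ⟨N, hN2, hN3, hN1⟩ : ∃ N : ℕ, 2*C^2*lam1^N ≤ 1/6 ∧
      C*(D*Real.exp (-lam*N)) ≤ 1/6 ∧ 1 ≤ N := by
    have t1 : Tendsto (fun n : ℕ => 2*C^2*lam1^n) atTop (nhds 0) := by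
      have := tendsto_pow_atTop_nhds_zero_of_lt_one hlam1pos.le hlam1lt
      simpa using this.const_mul (2*C^2)
    have t2 : Tendsto (fun n : ℕ => C*(D*Real.exp (-lam*n))) atTop (nhds 0) := by
      have he : Tendsto (fun n : ℕ => Real.exp (-lam) ^ n) atTop (nhds 0) :=
        tendsto_pow_atTop_nhds_zero_of_lt_one (Real.exp_pos _).le
          (Real.exp_lt_one_iff.mpr (by linarith))
      refine Filter.Tendsto.congr (fun n => ?_) (by simpa using he.const_mul (C*D))
      rw [← Real.exp_nat_mul, mul_comm (n:ℝ) (-lam)]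
      ring
    have e1 : ∀ᶠ n : ℕ in atTop, 2*C^2*lam1^n ≤ 1/6 :=
      t1.eventually (eventually_le_nhds (by norm_num))
    have e2 : ∀ᶠ n : ℕ in atTop, C*(D*Real.exp (-lam*n)) ≤ 1/6 :=
      t2.eventually (eventually_le_nhds (by norm_num))
    exact ((e1.and (e2.and (eventually_ge_atTop 1))).exists)
  have hNpos : (0:ℝ) < N := by exact_mod_cast hN1
  set ε₀ : ℝ := (6*C*K*N)⁻¹ with hε₀
  have hε₀pos : 0 < ε₀ := by positivity
  -- block contraction
  have hblock : ∀ ε ∈ I, |ε| ≤ ε₀ → ∀ ω ∈ Ω', ∀ h : Bs, ψ (ιw h) = 0 →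
      ‖iterOp σ L ε (2*N) ω h‖ ≤ (1/2) * ‖h‖ := by
    intro ε hε hε0 ω hω h hh
    have hsplit : iterOp σ L ε (2*N) ω = iterOp σ L ε N (σ^[N] ω) ∘L iterOp σ L ε N ω := by
      rw [two_mul]; exact iterOp_add σ L ε N N ω
    have hg : ‖iterOp σ L ε N ω h‖ ≤ 2*C*‖h‖ := hbound ε hε ω hω N h
    have hQ : ‖iterOp σ L 0 N ω h‖ ≤ D * Real.exp (-lam*N) * ‖h‖ := hdec ω hω N h hh
    have hιg : ‖ιw (iterOp σ L ε N ω h)‖ ≤ N*(K * |ε| * ‖h‖) + D*Real.exp (-lam*N)*‖h‖ := by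
      have htel0 := htel ε hε h N 0 ω hω
      have h0 : iterOp σ Lw ε 0 (σ^[N] ω)
          (ιw (iterOp σ L ε N ω h) - ιw (iterOp σ L 0 N ω h))
          = ιw (iterOp σ L ε N ω h) - ιw (iterOp σ L 0 N ω h) := rfl
      rw [h0] at htel0
      calc ‖ιw (iterOp σ L ε N ω h)‖
          = ‖(ιw (iterOp σ L ε N ω h) - ιw (iterOp σ L 0 N ω h))
              + ιw (iterOp σ L 0 N ω h)‖ := by rw [sub_add_cancel]
        _ ≤ ‖ιw (iterOp σ L ε N ω h) - ιw (iterOp σ L 0 N ω h)‖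
              + ‖ιw (iterOp σ L 0 N ω h)‖ := norm_add_le _ _
        _ ≤ N*(K * |ε| * ‖h‖) + D*Real.exp (-lam*N)*‖h‖ :=
            add_le_add htel0 (le_trans (hιw_norm _) hQ)
    have hεK : C*N*K * |ε| ≤ 1/6 := by
      calc C*N*K * |ε| ≤ C*N*K*ε₀ := by gcongr
        _ = 1/6 := by
            rw [hε₀]
            field_simp
    calc ‖iterOp σ L ε (2*N) ω h‖
        = ‖iterOp σ L ε N (σ^[N] ω) (iterOp σ L ε N ω h)‖ := by rw [hsplit]; rfl
      _ ≤ C * lam1^N * ‖iterOp σ L ε N ω h‖ + C * ‖ιw (iterOp σ L ε N ω h)‖ :=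
          h1 ε hε _ (hΩiter N ω hω) N _
      _ ≤ C * lam1^N * (2*C*‖h‖) + C * (N*(K * |ε| * ‖h‖) + D*Real.exp (-lam*N)*‖h‖) := by
          gcongr
      _ = (2*C^2*lam1^N)*‖h‖ + (C*N*K * |ε|)*‖h‖ + (C*(D*Real.exp (-lam*N)))*‖h‖ := by ring
      _ ≤ (1/6)*‖h‖ + (1/6)*‖h‖ + (1/6)*‖h‖ := by gcongr
      _ = (1/2)*‖h‖ := by ring
  -- iterated blocks
  have hiter : ∀ ε ∈ I, |ε| ≤ ε₀ → ∀ (q : ℕ), ∀ ω ∈ Ω', ∀ h : Bs, ψ (ιw h) = 0 →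
      ‖iterOp σ L ε (q*(2*N)) ω h‖ ≤ (1/2:ℝ)^q * ‖h‖ := by
    intro ε hε hε0 q
    induction q with
    | zero => intro ω hω h hh; simp [iterOp]
    | succ q ih =>
        intro ω hω h hh
        have hsplit : iterOp σ L ε ((q+1)*(2*N)) ω
            = iterOp σ L ε (2*N) (σ^[q*(2*N)] ω) ∘L iterOp σ L ε (q*(2*N)) ω := by
          rw [show (q+1)*(2*N) = q*(2*N) + 2*N by ring]
          exact iterOp_add σ L ε _ _ ω
        calc ‖iterOp σ L ε ((q+1)*(2*N)) ω h‖
            = ‖iterOp σ L ε (2*N) (σ^[q*(2*N)] ω) (iterOp σ L ε (q*(2*N)) ω h)‖ := by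
              rw [hsplit]; rfl
          _ ≤ (1/2) * ‖iterOp σ L ε (q*(2*N)) ω h‖ :=
              hblock ε hε hε0 _ (hΩiter _ ω hω) _
                (by rw [hker ε hε _ ω hω h]; exact hh)
          _ ≤ (1/2) * ((1/2:ℝ)^q * ‖h‖) := by
              have := ih ω hω h hh
              linarith
          _ = (1/2:ℝ)^(q+1) * ‖h‖ := by ring
  -- conclusion
  refine ⟨ε₀, hε₀pos, 2*max (2*C) 1, by positivity,
    Real.log 2 / (2*N), div_pos (Real.log_pos one_lt_two) (by positivity), ?_⟩
  intro ε hε hε0 ω hω n h hh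
  have hM : 0 < 2*N := by omega
  set q := n / (2*N) with hq
  set r := n % (2*N) with hr
  have hn : n = q*(2*N) + r := (Nat.div_add_mod' n (2*N)).symm
  have hsplit : iterOp σ L ε n ω
      = iterOp σ L ε r (σ^[q*(2*N)] ω) ∘L iterOp σ L ε (q*(2*N)) ω := by
    conv_lhs => rw [hn]
    exact iterOp_add σ L ε _ _ ω
  have hmax1 : (1:ℝ) ≤ max (2*C) 1 := le_max_right _ _
  have hhalf : (1/2:ℝ)^q ≤ 2*Real.exp (-(Real.log 2 / (2*N)) * n) := by
    have hqexp : Real.exp (-(q * Real.log 2)) = (1/2:ℝ)^q := by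
      rw [Real.exp_neg, Real.exp_nat_mul, Real.exp_log two_pos]
      simp [one_div, inv_pow]
    have h2N : (0:ℝ) < 2*N := by positivity
    have hlog2 : (0:ℝ) < Real.log 2 := Real.log_pos one_lt_two
    have hn' : (n:ℝ) ≤ (q+1)*(2*N) := by
      have : n ≤ (q+1)*(2*N) := by
        rw [hn]
        have : r < 2*N := Nat.mod_lt _ hM
        nlinarith
      exact_mod_cast this
    have hkey : Real.log 2 / (2*N) * n ≤ Real.log 2 * (q+1) := by
      calc Real.log 2 / (2*N) * n ≤ Real.log 2 / (2*N) * ((q+1)*(2*N)) := by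
            gcongr
        _ = Real.log 2 * (q+1) := by field_simp
    calc (1/2:ℝ)^q = Real.exp (-(q * Real.log 2)) := hqexp.symm
      _ ≤ Real.exp (Real.log 2 + (-(Real.log 2 / (2*N)) * n)) := by
          rw [Real.exp_le_exp]
          nlinarith
      _ = 2*Real.exp (-(Real.log 2 / (2*N)) * n) := by
          rw [Real.exp_add, Real.exp_log two_pos]
  calc ‖iterOp σ L ε n ω h‖
      = ‖iterOp σ L ε r (σ^[q*(2*N)] ω) (iterOp σ L ε (q*(2*N)) ω h)‖ := by
        rw [hsplit]; rfl
    _ ≤ 2*C * ‖iterOp σ L ε (q*(2*N)) ω h‖ :=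
        hbound ε hε _ (hΩiter _ ω hω) r _
    _ ≤ max (2*C) 1 * ‖iterOp σ L ε (q*(2*N)) ω h‖ := by
        gcongr
        exact le_max_left _ _
    _ ≤ max (2*C) 1 * ((1/2:ℝ)^q * ‖h‖) :=
        mul_le_mul_of_nonneg_left (hiter ε hε hε0 q ω hω h hh)
          (le_trans zero_le_one hmax1)
    _ ≤ max (2*C) 1 * ((2*Real.exp (-(Real.log 2 / (2*N)) * n)) * ‖h‖) :=
        mul_le_mul_of_nonneg_left (mul_le_mul_of_nonneg_right hhalf (norm_nonneg h))
          (le_trans zero_le_one hmax1)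
    _ = 2*max (2*C) 1 * Real.exp (-(Real.log 2 / (2*N)) * n) * ‖h‖ := by ring
end
end

section
/- For every ε ∈ I, every ω ∈ Ω', every n ∈ ℕ and every h ∈ B_s, one has ‖(L_{ω,ε}ⁿ − L_ωⁿ) h‖_w ≤ C³ |ε| ( (1/(1−λ₁)) ‖h‖_s + n ‖h‖_w ). -/
open MeasureTheory Filter Topology

noncomputable section

theorem stmt_1
    {Ω : Type*} [MeasurableSpace Ω] (P : Measure Ω) [IsProbabilityMeasure P]
    (σ σinv : Ω → Ω)
    (hσinv₁ : Function.LeftInverse σinv σ) (hσinv₂ : Function.RightInverse σinv σ)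
    (hσinvmeas : Measurable σinv)
    (hσerg : Ergodic σ P)
    {Bs Bw : Type*}
    [NormedAddCommGroup Bs] [NormedSpace ℝ Bs] [CompleteSpace Bs]
    [NormedAddCommGroup Bw] [NormedSpace ℝ Bw] [CompleteSpace Bw]
    [MeasurableSpace Bs] [BorelSpace Bs]
    (ιw : Bs →ₗ[ℝ] Bw) (hιw_inj : Function.Injective ιw)
    (hιw_norm : ∀ h : Bs, ‖ιw h‖ ≤ ‖h‖)
    (ψ : Bw →L[ℝ] ℝ) (hψ_ne : ∃ g : Bs, ψ (ιw g) ≠ 0)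
    (I : Set ℝ) (hI : I ∈ nhds (0 : ℝ))
    (L : Ω → ℝ → (Bs →L[ℝ] Bs)) (Lw : Ω → ℝ → (Bw →L[ℝ] Bw))
    (hcompat : ∀ (ω : Ω) (ε : ℝ) (h : Bs), ιw (L ω ε h) = Lw ω ε (ιw h))
    (hmeas : ∀ ε ∈ I, ∀ h : Bs, Measurable fun ω => L ω ε h)
    (D lam C lam1 : ℝ) (hD : 0 < D) (hlam : 0 < lam) (hC : 0 < C)
    (hlam1 : lam1 ∈ Set.Ioo (0 : ℝ) 1)
    (Ω' : Set Ω) (hΩ'meas : MeasurableSet Ω') (hΩ'full : P Ω' = 1)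
    (hΩ'inv : ∀ ω, ω ∈ Ω' ↔ σ ω ∈ Ω')
    (hdec : ∀ ω ∈ Ω', ∀ n : ℕ, ∀ h : Bs, ψ (ιw h) = 0 →
      ‖iterOp σ L 0 n ω h‖ ≤ D * Real.exp (-lam * n) * ‖h‖)
    (h1 : ∀ ε ∈ I, ∀ ω ∈ Ω', ∀ n : ℕ, ∀ h : Bs,
      ‖iterOp σ L ε n ω h‖ ≤ C * lam1 ^ n * ‖h‖ + C * ‖ιw h‖)
    (h2 : ∀ ε ∈ I, ∀ ω ∈ Ω', ∀ h : Bs,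
      ‖ιw (L ω ε h) - ιw (L ω 0 h)‖ ≤ C * |ε| * ‖h‖)
    (h3 : ∀ ε ∈ I, ∀ ω ∈ Ω', ∀ n : ℕ, ‖iterOp σ Lw ε n ω‖ ≤ C)
    (h4 : ∀ ε ∈ I, ∀ ω ∈ Ω', ∀ h : Bs, ψ (ιw (L ω ε h)) = ψ (ιw h))
    :
    ∀ ε ∈ I, ∀ ω ∈ Ω', ∀ n : ℕ, ∀ h : Bs,
      ‖ιw (iterOp σ L ε n ω h) - ιw (iterOp σ L 0 n ω h)‖ ≤
        C ^ 3 * |ε| * ((1 / (1 - lam1)) * ‖h‖ + n * ‖ιw h‖) := by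

  intro ε hε ω hω n h
  have h0I : (0:ℝ) ∈ I := mem_of_mem_nhds hI
  obtain ⟨hl1pos, hl1lt⟩ := hlam1
  have hden : 0 < 1 - lam1 := by linarith
  -- compatibility of the embedding with the iterated cocycle
  have compat : ∀ (ε : ℝ) (n : ℕ) (ω : Ω) (h : Bs),
      ιw (iterOp σ L ε n ω h) = iterOp σ Lw ε n ω (ιw h) := by
    intro ε n
    induction n with
    | zero => intro ω h; rfl
    | succ n ih =>
      intro ω h
      show ιw (iterOp σ L ε n (σ ω) (L ω ε h)) = iterOp σ Lw ε n (σ ω) (Lw ω ε (ιw h))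
      rw [ih, hcompat]
  -- telescoping estimate
  have key : ∀ n : ℕ, ∀ ω ∈ Ω', ∀ h : Bs,
      ‖ιw (iterOp σ L ε n ω h) - ιw (iterOp σ L 0 n ω h)‖ ≤
        ∑ k ∈ Finset.range n, C ^ 2 * |ε| * ‖iterOp σ L 0 k ω h‖ := by
    intro n
    induction n with
    | zero => intro ω hω h; simp [iterOp]
    | succ n ih =>
      intro ω hω h
      have hσω : σ ω ∈ Ω' := (hΩ'inv ω).1 hω
      have e1 : iterOp σ L ε (n+1) ω h = iterOp σ L ε n (σ ω) (L ω ε h) := rfl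
      have e0 : iterOp σ L 0 (n+1) ω h = iterOp σ L 0 n (σ ω) (L ω 0 h) := rfl
      rw [e1, e0]
      have split : ιw (iterOp σ L ε n (σ ω) (L ω ε h)) - ιw (iterOp σ L 0 n (σ ω) (L ω 0 h))
          = (ιw (iterOp σ L ε n (σ ω) (L ω ε h)) - ιw (iterOp σ L ε n (σ ω) (L ω 0 h)))
            + (ιw (iterOp σ L ε n (σ ω) (L ω 0 h)) - ιw (iterOp σ L 0 n (σ ω) (L ω 0 h))) := by
        abel
      have t1 : ‖ιw (iterOp σ L ε n (σ ω) (L ω ε h)) - ιw (iterOp σ L ε n (σ ω) (L ω 0 h))‖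
          ≤ C ^ 2 * |ε| * ‖h‖ := by
        have heq : ιw (iterOp σ L ε n (σ ω) (L ω ε h)) - ιw (iterOp σ L ε n (σ ω) (L ω 0 h))
            = iterOp σ Lw ε n (σ ω) (ιw (L ω ε h) - ιw (L ω 0 h)) := by
          rw [map_sub, compat, compat]
        rw [heq]
        calc ‖iterOp σ Lw ε n (σ ω) (ιw (L ω ε h) - ιw (L ω 0 h))‖
            ≤ ‖iterOp σ Lw ε n (σ ω)‖ * ‖ιw (L ω ε h) - ιw (L ω 0 h)‖ :=
              ContinuousLinearMap.le_opNorm _ _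
          _ ≤ C * (C * |ε| * ‖h‖) :=
              mul_le_mul (h3 ε hε _ hσω n) (h2 ε hε ω hω h) (norm_nonneg _) hC.le
          _ = C ^ 2 * |ε| * ‖h‖ := by ring
      have t2 := ih (σ ω) hσω (L ω 0 h)
      have shift : ∀ k, iterOp σ L 0 k (σ ω) (L ω 0 h) = iterOp σ L 0 (k+1) ω h :=
        fun k => rfl
      rw [split]
      refine le_trans (norm_add_le _ _) ?_
      rw [Finset.sum_range_succ']
      have e00 : iterOp σ L 0 0 ω h = h := rfl
      have hsum : ∑ k ∈ Finset.range n, C ^ 2 * |ε| * ‖iterOp σ L 0 k (σ ω) (L ω 0 h)‖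
          = ∑ k ∈ Finset.range n, C ^ 2 * |ε| * ‖iterOp σ L 0 (k+1) ω h‖ := by
        refine Finset.sum_congr rfl fun k _ => by rw [shift]
      rw [hsum] at t2
      rw [e00]
      linarith
  -- final estimate
  have geo : ∑ k ∈ Finset.range n, lam1 ^ k ≤ 1 / (1 - lam1) := by
    rw [geom_sum_eq (ne_of_lt hl1lt)]
    have hrw : (lam1 ^ n - 1) / (lam1 - 1) = (1 - lam1 ^ n) / (1 - lam1) := by
      rw [← neg_div_neg_eq]; ring_nf
    rw [hrw]
    have hpow : (0:ℝ) ≤ lam1 ^ n := pow_nonneg hl1pos.le n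
    exact (div_le_div_iff_of_pos_right hden).mpr (by linarith)
  calc ‖ιw (iterOp σ L ε n ω h) - ιw (iterOp σ L 0 n ω h)‖
      ≤ ∑ k ∈ Finset.range n, C ^ 2 * |ε| * ‖iterOp σ L 0 k ω h‖ := key n ω hω h
    _ ≤ ∑ k ∈ Finset.range n, C ^ 2 * |ε| * (C * lam1 ^ k * ‖h‖ + C * ‖ιw h‖) := by
        refine Finset.sum_le_sum fun k _ => ?_
        have := h1 0 h0I ω hω k h
        have hnn : (0:ℝ) ≤ C ^ 2 * |ε| := by positivity
        exact mul_le_mul_of_nonneg_left this hnn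
    _ = (C ^ 3 * |ε| * ‖h‖) * (∑ k ∈ Finset.range n, lam1 ^ k)
          + n * (C ^ 3 * |ε| * ‖ιw h‖) := by
        rw [Finset.sum_congr rfl (fun k (_ : k ∈ Finset.range n) =>
          show C ^ 2 * |ε| * (C * lam1 ^ k * ‖h‖ + C * ‖ιw h‖)
            = (C ^ 3 * |ε| * ‖h‖) * lam1 ^ k + C ^ 3 * |ε| * ‖ιw h‖ by ring)]
        rw [Finset.sum_add_distrib, ← Finset.mul_sum, Finset.sum_const,
          Finset.card_range, nsmul_eq_mul]
    _ ≤ C ^ 3 * |ε| * ((1 / (1 - lam1)) * ‖h‖ + n * ‖ιw h‖) := by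
        have hnn : (0:ℝ) ≤ C ^ 3 * |ε| * ‖h‖ := by positivity
        have := mul_le_mul_of_nonneg_left geo hnn
        nlinarith [this]
end
end

section
/- Lemma 3.4: The quantity sup over ε ∈ I with |ε| ≤ ε₀ of sup_{ω∈Ω'} ‖h_ω^ε‖_s is finite, i.e. sup_{|ε|≤ε₀} sup_{ω∈Ω'} ‖h_ω^ε‖_s < ∞. -/
open MeasureTheory Filter Topology

noncomputable section

theorem stmt_4
    {Ω : Type*} [MeasurableSpace Ω] (P : Measure Ω) [IsProbabilityMeasure P]
    (σ σinv : Ω → Ω)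
    (hσinv₁ : Function.LeftInverse σinv σ) (hσinv₂ : Function.RightInverse σinv σ)
    (hσinvmeas : Measurable σinv)
    (hσerg : Ergodic σ P)
    {Bs Bw : Type*}
    [NormedAddCommGroup Bs] [NormedSpace ℝ Bs] [CompleteSpace Bs]
    [NormedAddCommGroup Bw] [NormedSpace ℝ Bw] [CompleteSpace Bw]
    [MeasurableSpace Bs] [BorelSpace Bs]
    (ιw : Bs →ₗ[ℝ] Bw) (hιw_inj : Function.Injective ιw)
    (hιw_norm : ∀ h : Bs, ‖ιw h‖ ≤ ‖h‖)
    (ψ : Bw →L[ℝ] ℝ) (hψ_ne : ∃ g : Bs, ψ (ιw g) ≠ 0)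
    (I : Set ℝ) (hI : I ∈ nhds (0 : ℝ))
    (L : Ω → ℝ → (Bs →L[ℝ] Bs)) (Lw : Ω → ℝ → (Bw →L[ℝ] Bw))
    (hcompat : ∀ (ω : Ω) (ε : ℝ) (h : Bs), ιw (L ω ε h) = Lw ω ε (ιw h))
    (hmeas : ∀ ε ∈ I, ∀ h : Bs, Measurable fun ω => L ω ε h)
    (D lam C lam1 : ℝ) (hD : 0 < D) (hlam : 0 < lam) (hC : 0 < C)
    (hlam1 : lam1 ∈ Set.Ioo (0 : ℝ) 1)
    (Ω' : Set Ω) (hΩ'meas : MeasurableSet Ω') (hΩ'full : P Ω' = 1)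
    (hΩ'inv : ∀ ω, ω ∈ Ω' ↔ σ ω ∈ Ω')
    (hdec : ∀ ω ∈ Ω', ∀ n : ℕ, ∀ h : Bs, ψ (ιw h) = 0 →
      ‖iterOp σ L 0 n ω h‖ ≤ D * Real.exp (-lam * n) * ‖h‖)
    (h1 : ∀ ε ∈ I, ∀ ω ∈ Ω', ∀ n : ℕ, ∀ h : Bs,
      ‖iterOp σ L ε n ω h‖ ≤ C * lam1 ^ n * ‖h‖ + C * ‖ιw h‖)
    (h2 : ∀ ε ∈ I, ∀ ω ∈ Ω', ∀ h : Bs,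
      ‖ιw (L ω ε h) - ιw (L ω 0 h)‖ ≤ C * |ε| * ‖h‖)
    (h3 : ∀ ε ∈ I, ∀ ω ∈ Ω', ∀ n : ℕ, ‖iterOp σ Lw ε n ω‖ ≤ C)
    (h4 : ∀ ε ∈ I, ∀ ω ∈ Ω', ∀ h : Bs, ψ (ιw (L ω ε h)) = ψ (ιw h))
    (ε₀ D' lam' : ℝ) (hε₀ : 0 < ε₀) (hD' : 0 < D') (hlam' : 0 < lam')
    (hdec' : ∀ ε ∈ I, |ε| ≤ ε₀ → ∀ ω ∈ Ω', ∀ n : ℕ, ∀ h : Bs, ψ (ιw h) = 0 →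
      ‖iterOp σ L ε n ω h‖ ≤ D' * Real.exp (-lam' * n) * ‖h‖)
    (hfun : ℝ → Ω → Bs)
    (hfam : ∀ ε ∈ I, |ε| ≤ ε₀ →
      Measurable (hfun ε) ∧ (∃ M : ℝ, ∀ ω ∈ Ω', ‖hfun ε ω‖ ≤ M) ∧
      (∀ ω ∈ Ω', ψ (ιw (hfun ε ω)) = 1) ∧
      (∀ ω ∈ Ω', L ω ε (hfun ε ω) = hfun ε (σ ω)))
    :
    ∃ M : ℝ, ∀ ε ∈ I, |ε| ≤ ε₀ → ∀ ω ∈ Ω', ‖hfun ε ω‖ ≤ M := by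
  have h0I : (0 : ℝ) ∈ I := mem_of_mem_nhds hI
  obtain ⟨hm0, ⟨M₀, hM₀⟩, hψ0, heq0⟩ := hfam 0 h0I (by simp [hε₀.le])
  refine ⟨C * M₀, ?_⟩
  intro ε hεI hεε₀ ω hω
  obtain ⟨hmε, ⟨Mε, hMε⟩, hψε, heqε⟩ := hfam ε hεI hεε₀
  have hinvmem : ∀ x, x ∈ Ω' → σinv x ∈ Ω' := fun x hx =>
    (hΩ'inv (σinv x)).mpr (by rwa [hσinv₂ x])
  have hitermem : ∀ n : ℕ, σinv^[n] ω ∈ Ω' := by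
    intro n; induction n with
    | zero => simpa using hω
    | succ n ih => rw [Function.iterate_succ_apply']; exact hinvmem _ ih
  have key : ∀ (ε' : ℝ), (∀ x ∈ Ω', L x ε' (hfun ε' x) = hfun ε' (σ x)) →
      ∀ n : ℕ, iterOp σ L ε' n (σinv^[n] ω) (hfun ε' (σinv^[n] ω)) = hfun ε' ω := by
    intro ε' hf n
    induction n with
    | zero => simp [iterOp]
    | succ n ih =>
      rw [Function.iterate_succ_apply']
      have h1' : σ (σinv (σinv^[n] ω)) = σinv^[n] ω := hσinv₂ _
      have hmem : σinv (σinv^[n] ω) ∈ Ω' := hinvmem _ (hitermem n)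
      calc iterOp σ L ε' (n + 1) (σinv (σinv^[n] ω)) (hfun ε' (σinv (σinv^[n] ω)))
          = iterOp σ L ε' n (σ (σinv (σinv^[n] ω)))
              (L (σinv (σinv^[n] ω)) ε' (hfun ε' (σinv (σinv^[n] ω)))) := rfl
        _ = iterOp σ L ε' n (σinv^[n] ω) (hfun ε' (σinv^[n] ω)) := by
              rw [hf _ hmem, h1']
        _ = hfun ε' ω := ih
  have bound : ∀ n : ℕ,
      ‖hfun ε ω‖ ≤ C * lam1 ^ n * M₀ + C * M₀
        + D' * Real.exp (-lam' * n) * (Mε + M₀) := by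
    intro n
    set ω' := σinv^[n] ω with hω'def
    have hω'mem : ω' ∈ Ω' := hitermem n
    have hrep : iterOp σ L ε n ω' (hfun ε ω') = hfun ε ω := key ε heqε n
    set g := hfun ε ω' - hfun 0 ω' with hg
    have hψg : ψ (ιw g) = 0 := by
      simp [hg, map_sub, hψε _ hω'mem, hψ0 _ hω'mem]
    have hsplit : hfun ε ω = iterOp σ L ε n ω' (hfun 0 ω') + iterOp σ L ε n ω' g := by
      rw [← map_add]
      have : hfun 0 ω' + g = hfun ε ω' := by rw [hg]; abel
      rw [this, hrep]
    have hgnorm : ‖g‖ ≤ Mε + M₀ := by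
      calc ‖g‖ ≤ ‖hfun ε ω'‖ + ‖hfun 0 ω'‖ := norm_sub_le _ _
        _ ≤ Mε + M₀ := add_le_add (hMε _ hω'mem) (hM₀ _ hω'mem)
    have hweak : ‖ιw (hfun 0 ω')‖ ≤ M₀ := (hιw_norm _).trans (hM₀ _ hω'mem)
    calc ‖hfun ε ω‖ ≤ ‖iterOp σ L ε n ω' (hfun 0 ω')‖ + ‖iterOp σ L ε n ω' g‖ := by
          rw [hsplit]; exact norm_add_le _ _
      _ ≤ (C * lam1 ^ n * ‖hfun 0 ω'‖ + C * ‖ιw (hfun 0 ω')‖)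
            + D' * Real.exp (-lam' * n) * ‖g‖ :=
          add_le_add (h1 ε hεI ω' hω'mem n _) (hdec' ε hεI hεε₀ ω' hω'mem n g hψg)
      _ ≤ (C * lam1 ^ n * M₀ + C * M₀) + D' * Real.exp (-lam' * n) * (Mε + M₀) := by
          gcongr <;> first
            | exact hM₀ _ hω'mem
            | exact hweak
            | exact hgnorm
            | exact (mul_pos hC (pow_pos hlam1.1 n)).le
            | exact (mul_pos hD' (Real.exp_pos _)).le
            | positivity
  have hexp : Tendsto (fun n : ℕ => Real.exp (-lam' * n)) atTop (𝓝 0) := by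
    have hrw : (fun n : ℕ => Real.exp (-lam' * n)) = fun n : ℕ => Real.exp (-lam') ^ n := by
      funext n
      rw [← Real.exp_nat_mul]
      ring_nf
    rw [hrw]
    exact tendsto_pow_atTop_nhds_zero_of_lt_one (Real.exp_pos _).le
      (Real.exp_lt_one_iff.mpr (neg_neg_iff_pos.mpr hlam'))
  have hlim : Tendsto (fun n : ℕ => C * lam1 ^ n * M₀ + C * M₀
      + D' * Real.exp (-lam' * n) * (Mε + M₀)) atTop
      (𝓝 (C * 0 * M₀ + C * M₀ + D' * 0 * (Mε + M₀))) := by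
    refine Tendsto.add (Tendsto.add ?_ tendsto_const_nhds) ?_
    · exact (((tendsto_pow_atTop_nhds_zero_of_lt_one hlam1.1.le hlam1.2).const_mul C).mul_const M₀)
    · exact ((hexp.const_mul D').mul_const (Mε + M₀))
  have := ge_of_tendsto' hlim bound
  simpa using this
end
end

section
/- For every ε ∈ I with |ε| ≤ ε₀ and every ω ∈ Ω', the largest Lyapunov exponent of the perturbed cocycle vanishes: lim_{n→∞} (1/n) log ‖L_{ω,ε}ⁿ‖_{B_s→B_s} = 0. -/
open MeasureTheory Filter Topology

noncomputable section

theorem stmt_7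
    {Ω : Type*} [MeasurableSpace Ω] (P : Measure Ω) [IsProbabilityMeasure P]
    (σ σinv : Ω → Ω)
    (hσinv₁ : Function.LeftInverse σinv σ) (hσinv₂ : Function.RightInverse σinv σ)
    (hσinvmeas : Measurable σinv)
    (hσerg : Ergodic σ P)
    {Bs Bw : Type*}
    [NormedAddCommGroup Bs] [NormedSpace ℝ Bs] [CompleteSpace Bs]
    [NormedAddCommGroup Bw] [NormedSpace ℝ Bw] [CompleteSpace Bw]
    [MeasurableSpace Bs] [BorelSpace Bs]
    (ιw : Bs →ₗ[ℝ] Bw) (hιw_inj : Function.Injective ιw)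
    (hιw_norm : ∀ h : Bs, ‖ιw h‖ ≤ ‖h‖)
    (ψ : Bw →L[ℝ] ℝ) (hψ_ne : ∃ g : Bs, ψ (ιw g) ≠ 0)
    (I : Set ℝ) (hI : I ∈ nhds (0 : ℝ))
    (L : Ω → ℝ → (Bs →L[ℝ] Bs)) (Lw : Ω → ℝ → (Bw →L[ℝ] Bw))
    (hcompat : ∀ (ω : Ω) (ε : ℝ) (h : Bs), ιw (L ω ε h) = Lw ω ε (ιw h))
    (hmeas : ∀ ε ∈ I, ∀ h : Bs, Measurable fun ω => L ω ε h)
    (D lam C lam1 : ℝ) (hD : 0 < D) (hlam : 0 < lam) (hC : 0 < C)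
    (hlam1 : lam1 ∈ Set.Ioo (0 : ℝ) 1)
    (Ω' : Set Ω) (hΩ'meas : MeasurableSet Ω') (hΩ'full : P Ω' = 1)
    (hΩ'inv : ∀ ω, ω ∈ Ω' ↔ σ ω ∈ Ω')
    (hdec : ∀ ω ∈ Ω', ∀ n : ℕ, ∀ h : Bs, ψ (ιw h) = 0 →
      ‖iterOp σ L 0 n ω h‖ ≤ D * Real.exp (-lam * n) * ‖h‖)
    (h1 : ∀ ε ∈ I, ∀ ω ∈ Ω', ∀ n : ℕ, ∀ h : Bs,
      ‖iterOp σ L ε n ω h‖ ≤ C * lam1 ^ n * ‖h‖ + C * ‖ιw h‖)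
    (h2 : ∀ ε ∈ I, ∀ ω ∈ Ω', ∀ h : Bs,
      ‖ιw (L ω ε h) - ιw (L ω 0 h)‖ ≤ C * |ε| * ‖h‖)
    (h3 : ∀ ε ∈ I, ∀ ω ∈ Ω', ∀ n : ℕ, ‖iterOp σ Lw ε n ω‖ ≤ C)
    (h4 : ∀ ε ∈ I, ∀ ω ∈ Ω', ∀ h : Bs, ψ (ιw (L ω ε h)) = ψ (ιw h))
    (ε₀ D' lam' : ℝ) (hε₀ : 0 < ε₀) (hD' : 0 < D') (hlam' : 0 < lam')
    (hdec' : ∀ ε ∈ I, |ε| ≤ ε₀ → ∀ ω ∈ Ω', ∀ n : ℕ, ∀ h : Bs, ψ (ιw h) = 0 →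
      ‖iterOp σ L ε n ω h‖ ≤ D' * Real.exp (-lam' * n) * ‖h‖)
    (hfun : ℝ → Ω → Bs)
    (hfam : ∀ ε ∈ I, |ε| ≤ ε₀ →
      Measurable (hfun ε) ∧ (∃ M : ℝ, ∀ ω ∈ Ω', ‖hfun ε ω‖ ≤ M) ∧
      (∀ ω ∈ Ω', ψ (ιw (hfun ε ω)) = 1) ∧
      (∀ ω ∈ Ω', L ω ε (hfun ε ω) = hfun ε (σ ω)))
    :
    ∀ ε ∈ I, |ε| ≤ ε₀ → ∀ ω ∈ Ω',
      Tendsto (fun n : ℕ => Real.log ‖iterOp σ L ε n ω‖ / n) atTop (nhds 0) := by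

  intro ε hεI hεε₀ ω hω
  obtain ⟨-, ⟨M, hM⟩, hψ1, hequiv⟩ := hfam ε hεI hεε₀
  obtain ⟨g, hg⟩ := hψ_ne
  have hψne : ψ ≠ 0 := by
    intro h; apply hg; simp [h]
  have hψpos : 0 < ‖ψ‖ := by
    rcases (norm_nonneg ψ).eq_or_lt with h | h
    · exact absurd (ContinuousLinearMap.opNorm_zero_iff ψ |>.mp h.symm) hψne
    · exact h
  have hiter : ∀ n, σ^[n] ω ∈ Ω' := by
    intro n; induction n with
    | zero => simpa using hω
    | succ n ih => rw [Function.iterate_succ_apply']; exact (hΩ'inv _).mp ih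
  have hcocycle : ∀ n, ∀ ω' ∈ Ω', iterOp σ L ε n ω' (hfun ε ω') = hfun ε (σ^[n] ω') := by
    intro n
    induction n with
    | zero => intro ω' _; simp [iterOp]
    | succ n ih =>
      intro ω' hω'
      have h0 : iterOp σ L ε (n+1) ω' (hfun ε ω')
          = iterOp σ L ε n (σ ω') (L ω' ε (hfun ε ω')) := rfl
      rw [h0, hequiv ω' hω', ih (σ ω') ((hΩ'inv ω').mp hω'), Function.iterate_succ_apply]
  have hlow : ∀ ω' ∈ Ω', 1 / ‖ψ‖ ≤ ‖hfun ε ω'‖ := by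
    intro ω' hω'
    have h2' : (1:ℝ) ≤ ‖ψ‖ * ‖hfun ε ω'‖ := by
      calc (1:ℝ) = ‖ψ (ιw (hfun ε ω'))‖ := by rw [hψ1 ω' hω']; simp
        _ ≤ ‖ψ‖ * ‖ιw (hfun ε ω')‖ := ψ.le_opNorm _
        _ ≤ ‖ψ‖ * ‖hfun ε ω'‖ := by
            exact mul_le_mul_of_nonneg_left (hιw_norm _) (norm_nonneg ψ)
    rw [div_le_iff₀ hψpos]
    linarith
  have hMpos : 0 < M :=
    lt_of_lt_of_le (by positivity) ((hlow ω hω).trans (hM ω hω))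
  set c := 1 / (‖ψ‖ * M) with hc
  have hcpos : 0 < c := by positivity
  have hlb : ∀ n, c ≤ ‖iterOp σ L ε n ω‖ := by
    intro n
    have hop := (iterOp σ L ε n ω).le_opNorm (hfun ε ω)
    rw [hcocycle n ω hω] at hop
    have hkey : 1 / ‖ψ‖ ≤ ‖iterOp σ L ε n ω‖ * M :=
      (hlow _ (hiter n)).trans (hop.trans
        (mul_le_mul_of_nonneg_left (hM ω hω) (norm_nonneg _)))
    rw [div_le_iff₀ hψpos] at hkey
    rw [hc, div_le_iff₀ (by positivity)]
    nlinarith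
  have hub : ∀ n, ‖iterOp σ L ε n ω‖ ≤ 2 * C := by
    intro n
    apply ContinuousLinearMap.opNorm_le_bound _ (by positivity)
    intro h
    calc ‖iterOp σ L ε n ω h‖ ≤ C * lam1 ^ n * ‖h‖ + C * ‖ιw h‖ := h1 ε hεI ω hω n h
      _ ≤ C * 1 * ‖h‖ + C * ‖h‖ := by
          gcongr
          · exact pow_le_one₀ hlam1.1.le hlam1.2.le
          · exact hιw_norm h
      _ = 2 * C * ‖h‖ := by ring
  have hTl : Tendsto (fun n : ℕ => Real.log c / n) atTop (nhds 0) :=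
    tendsto_const_div_atTop_nhds_zero_nat _
  have hTu : Tendsto (fun n : ℕ => Real.log (2 * C) / n) atTop (nhds 0) :=
    tendsto_const_div_atTop_nhds_zero_nat _
  apply tendsto_of_tendsto_of_tendsto_of_le_of_le' hTl hTu
  · filter_upwards [eventually_ge_atTop 1] with n hn
    have hlog : Real.log c ≤ Real.log ‖iterOp σ L ε n ω‖ :=
      Real.log_le_log hcpos (hlb n)
    have hnp : (0:ℝ) < n := by exact_mod_cast hn
    exact div_le_div_of_nonneg_right hlog hnp.le
  · filter_upwards [eventually_ge_atTop 1] with n hn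
    have hlog : Real.log ‖iterOp σ L ε n ω‖ ≤ Real.log (2 * C) :=
      Real.log_le_log (hcpos.trans_le (hlb n)) (hub n)
    have hnp : (0:ℝ) < n := by exact_mod_cast hn
    exact div_le_div_of_nonneg_right hlog hnp.le
end
end

section
/- Fix ε ∈ I and constants D', λ' > 0, and assume ‖L_{ω,ε}ⁿ h‖_s ≤ D' e^{−λ'n} ‖h‖_s for all ω ∈ Ω', n ∈ ℕ and h ∈ B_s⁰. Let g ∈ B_s with ψ(g) = 1, and let (h_ω^ε)_{ω∈Ω'} ⊂ B_s satisfy ψ(h_ω^ε) = 1 and L_{ω,ε} h_ω^ε = h_{σω}^ε for all ω ∈ Ω'. Suppose there is a function K : Ω' → (0,∞) with ‖h_ω^ε − g‖_s ≤ K(ω) and K(σⁿω) ≤ e^{λ'|n|/2} K(ω) for all ω ∈ Ω' and n ∈ ℤ. Then for every ω ∈ Ω', L_{σ^{−n}ω,ε}ⁿ g → h_ω^ε in B_s as n → ∞; consequently ‖h_ω^ε‖_s ≤ C ‖g‖_w for every ω ∈ Ω'. -/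
open MeasureTheory Filter Topology

noncomputable section

theorem stmt_8
    {Ω : Type*} [MeasurableSpace Ω] (P : Measure Ω) [IsProbabilityMeasure P]
    (σ σinv : Ω → Ω)
    (hσinv₁ : Function.LeftInverse σinv σ) (hσinv₂ : Function.RightInverse σinv σ)
    (hσinvmeas : Measurable σinv)
    (hσerg : Ergodic σ P)
    {Bs Bw : Type*}
    [NormedAddCommGroup Bs] [NormedSpace ℝ Bs] [CompleteSpace Bs]
    [NormedAddCommGroup Bw] [NormedSpace ℝ Bw] [CompleteSpace Bw]
    [MeasurableSpace Bs] [BorelSpace Bs]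
    (ιw : Bs →ₗ[ℝ] Bw) (hιw_inj : Function.Injective ιw)
    (hιw_norm : ∀ h : Bs, ‖ιw h‖ ≤ ‖h‖)
    (ψ : Bw →L[ℝ] ℝ) (hψ_ne : ∃ g : Bs, ψ (ιw g) ≠ 0)
    (I : Set ℝ) (hI : I ∈ nhds (0 : ℝ))
    (L : Ω → ℝ → (Bs →L[ℝ] Bs)) (Lw : Ω → ℝ → (Bw →L[ℝ] Bw))
    (hcompat : ∀ (ω : Ω) (ε : ℝ) (h : Bs), ιw (L ω ε h) = Lw ω ε (ιw h))
    (hmeas : ∀ ε ∈ I, ∀ h : Bs, Measurable fun ω => L ω ε h)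
    (D lam C lam1 : ℝ) (hD : 0 < D) (hlam : 0 < lam) (hC : 0 < C)
    (hlam1 : lam1 ∈ Set.Ioo (0 : ℝ) 1)
    (Ω' : Set Ω) (hΩ'meas : MeasurableSet Ω') (hΩ'full : P Ω' = 1)
    (hΩ'inv : ∀ ω, ω ∈ Ω' ↔ σ ω ∈ Ω')
    (hdec : ∀ ω ∈ Ω', ∀ n : ℕ, ∀ h : Bs, ψ (ιw h) = 0 →
      ‖iterOp σ L 0 n ω h‖ ≤ D * Real.exp (-lam * n) * ‖h‖)
    (h1 : ∀ ε ∈ I, ∀ ω ∈ Ω', ∀ n : ℕ, ∀ h : Bs,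
      ‖iterOp σ L ε n ω h‖ ≤ C * lam1 ^ n * ‖h‖ + C * ‖ιw h‖)
    (h2 : ∀ ε ∈ I, ∀ ω ∈ Ω', ∀ h : Bs,
      ‖ιw (L ω ε h) - ιw (L ω 0 h)‖ ≤ C * |ε| * ‖h‖)
    (h3 : ∀ ε ∈ I, ∀ ω ∈ Ω', ∀ n : ℕ, ‖iterOp σ Lw ε n ω‖ ≤ C)
    (h4 : ∀ ε ∈ I, ∀ ω ∈ Ω', ∀ h : Bs, ψ (ιw (L ω ε h)) = ψ (ιw h))
    (ε : ℝ) (hε : ε ∈ I) (D' lam' : ℝ) (hD' : 0 < D') (hlam' : 0 < lam')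
    (hdecε : ∀ ω ∈ Ω', ∀ n : ℕ, ∀ h : Bs, ψ (ιw h) = 0 →
      ‖iterOp σ L ε n ω h‖ ≤ D' * Real.exp (-lam' * n) * ‖h‖)
    (g : Bs) (hg : ψ (ιw g) = 1)
    (hfun : Ω → Bs)
    (hfunψ : ∀ ω ∈ Ω', ψ (ιw (hfun ω)) = 1)
    (hfuneq : ∀ ω ∈ Ω', L ω ε (hfun ω) = hfun (σ ω))
    (K : Ω → ℝ) (hKpos : ∀ ω ∈ Ω', 0 < K ω)
    (hK1 : ∀ ω ∈ Ω', ‖hfun ω - g‖ ≤ K ω)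
    (hK2 : ∀ ω ∈ Ω', ∀ n : ℕ,
      K (σ^[n] ω) ≤ Real.exp (lam' * n / 2) * K ω ∧
      K (σinv^[n] ω) ≤ Real.exp (lam' * n / 2) * K ω)
    :
    ∀ ω ∈ Ω',
      Tendsto (fun n : ℕ => iterOp σ L ε n (σinv^[n] ω) g) atTop (nhds (hfun ω)) ∧
      ‖hfun ω‖ ≤ C * ‖ιw g‖ := by

  -- auxiliary facts
  have hmemσ : ∀ ω ∈ Ω', σ ω ∈ Ω' := fun ω hω => (hΩ'inv ω).mp hω
  have hmemInv : ∀ ω ∈ Ω', ∀ n : ℕ, σinv^[n] ω ∈ Ω' := by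
    intro ω hω n
    induction n with
    | zero => exact hω
    | succ n ih =>
      rw [Function.iterate_succ_apply']
      exact (hΩ'inv _).mpr (by rwa [hσinv₂])
  have hiter : ∀ n : ℕ, ∀ ω ∈ Ω', iterOp σ L ε n ω (hfun ω) = hfun (σ^[n] ω) := by
    intro n
    induction n with
    | zero => intro ω hω; rfl
    | succ n ih =>
      intro ω hω
      show iterOp σ L ε n (σ ω) (L ω ε (hfun ω)) = hfun (σ^[n+1] ω)
      rw [hfuneq ω hω, ih (σ ω) (hmemσ ω hω), Function.iterate_succ_apply]
  intro ω hω
  set u : ℕ → Bs := fun n => iterOp σ L ε n (σinv^[n] ω) g with hu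
  have hσinviter : ∀ n : ℕ, σ^[n] (σinv^[n] ω) = ω := fun n => hσinv₂.iterate n ω
  have hdiff : ∀ n : ℕ, u n - hfun ω = iterOp σ L ε n (σinv^[n] ω) (g - hfun (σinv^[n] ω)) := by
    intro n
    rw [map_sub, hiter n _ (hmemInv ω hω n), hσinviter n]
  have hψ0 : ∀ n : ℕ, ψ (ιw (g - hfun (σinv^[n] ω))) = 0 := by
    intro n
    rw [map_sub, map_sub, hg, hfunψ _ (hmemInv ω hω n), sub_self]
  have hbound : ∀ n : ℕ, ‖u n - hfun ω‖ ≤ (D' * K ω) * Real.exp (-(lam'/2)) ^ n := by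
    intro n
    rw [hdiff n]
    calc ‖iterOp σ L ε n (σinv^[n] ω) (g - hfun (σinv^[n] ω))‖
        ≤ D' * Real.exp (-lam' * n) * ‖g - hfun (σinv^[n] ω)‖ :=
          hdecε _ (hmemInv ω hω n) n _ (hψ0 n)
      _ ≤ D' * Real.exp (-lam' * n) * (Real.exp (lam' * n / 2) * K ω) := by
          apply mul_le_mul_of_nonneg_left
          · rw [norm_sub_rev]
            exact (hK1 _ (hmemInv ω hω n)).trans ((hK2 ω hω n).2)
          · positivity
      _ = (D' * K ω) * (Real.exp (-lam' * n) * Real.exp (lam' * n / 2)) := by ring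
      _ = (D' * K ω) * Real.exp (-(lam'/2) * n) := by rw [← Real.exp_add]; ring_nf
      _ = (D' * K ω) * Real.exp (-(lam'/2)) ^ n := by
          rw [← Real.exp_nat_mul]; ring_nf
  have hexp1 : Real.exp (-(lam'/2)) < 1 := Real.exp_lt_one_iff.mpr (by linarith)
  have htend0 : Tendsto (fun n : ℕ => (D' * K ω) * Real.exp (-(lam'/2)) ^ n) atTop (nhds 0) := by
    have := tendsto_pow_atTop_nhds_zero_of_lt_one (Real.exp_nonneg _) hexp1
    simpa using this.const_mul (D' * K ω)
  have htend : Tendsto u atTop (nhds (hfun ω)) := by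
    rw [tendsto_iff_norm_sub_tendsto_zero]
    exact squeeze_zero (fun n => norm_nonneg _) hbound htend0
  refine ⟨htend, ?_⟩
  have hnormtend : Tendsto (fun n => ‖u n‖) atTop (nhds ‖hfun ω‖) := htend.norm
  have hrhs : Tendsto (fun n : ℕ => C * lam1 ^ n * ‖g‖ + C * ‖ιw g‖) atTop
      (nhds (C * ‖ιw g‖)) := by
    have := tendsto_pow_atTop_nhds_zero_of_lt_one hlam1.1.le hlam1.2
    have h' := ((this.const_mul C).mul_const ‖g‖).add_const (C * ‖ιw g‖)
    simpa using h'
  exact le_of_tendsto_of_tendsto' hnormtend hrhs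
    (fun n => h1 ε hε _ (hmemInv ω hω n) n g)
end
end

section
/- For every ω ∈ Ω', the series ĥ_ω := Σ_{j=0}^∞ L_{σ^{−j}ω}^j L̂_{σ^{−(j+1)}ω} h_{σ^{−(j+1)}ω} converges absolutely in B_s, one has ĥ_ω ∈ B_s⁰ (i.e. ψ(ĥ_ω) = 0), and sup_{ω∈Ω'} ‖ĥ_ω‖_s < ∞. -/
open MeasureTheory Filter Topology

noncomputable section

theorem stmt_12
    {Ω : Type*} [MeasurableSpace Ω] (P : Measure Ω) [IsProbabilityMeasure P]
    (σ σinv : Ω → Ω)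
    (hσinv₁ : Function.LeftInverse σinv σ) (hσinv₂ : Function.RightInverse σinv σ)
    (hσinvmeas : Measurable σinv)
    (hσerg : Ergodic σ P)
    {Bs Bw : Type*}
    [NormedAddCommGroup Bs] [NormedSpace ℝ Bs] [CompleteSpace Bs]
    [NormedAddCommGroup Bw] [NormedSpace ℝ Bw] [CompleteSpace Bw]
    [MeasurableSpace Bs] [BorelSpace Bs]
    (ιw : Bs →ₗ[ℝ] Bw) (hιw_inj : Function.Injective ιw)
    (hιw_norm : ∀ h : Bs, ‖ιw h‖ ≤ ‖h‖)
    (ψ : Bw →L[ℝ] ℝ) (hψ_ne : ∃ g : Bs, ψ (ιw g) ≠ 0)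
    (I : Set ℝ) (hI : I ∈ nhds (0 : ℝ))
    (L : Ω → ℝ → (Bs →L[ℝ] Bs)) (Lw : Ω → ℝ → (Bw →L[ℝ] Bw))
    (hcompat : ∀ (ω : Ω) (ε : ℝ) (h : Bs), ιw (L ω ε h) = Lw ω ε (ιw h))
    (hmeas : ∀ ε ∈ I, ∀ h : Bs, Measurable fun ω => L ω ε h)
    (D lam C lam1 : ℝ) (hD : 0 < D) (hlam : 0 < lam) (hC : 0 < C)
    (hlam1 : lam1 ∈ Set.Ioo (0 : ℝ) 1)
    (Ω' : Set Ω) (hΩ'meas : MeasurableSet Ω') (hΩ'full : P Ω' = 1)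
    (hΩ'inv : ∀ ω, ω ∈ Ω' ↔ σ ω ∈ Ω')
    (hdec : ∀ ω ∈ Ω', ∀ n : ℕ, ∀ h : Bs, ψ (ιw h) = 0 →
      ‖iterOp σ L 0 n ω h‖ ≤ D * Real.exp (-lam * n) * ‖h‖)
    (h1 : ∀ ε ∈ I, ∀ ω ∈ Ω', ∀ n : ℕ, ∀ h : Bs,
      ‖iterOp σ L ε n ω h‖ ≤ C * lam1 ^ n * ‖h‖ + C * ‖ιw h‖)
    (h2 : ∀ ε ∈ I, ∀ ω ∈ Ω', ∀ h : Bs,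
      ‖ιw (L ω ε h) - ιw (L ω 0 h)‖ ≤ C * |ε| * ‖h‖)
    (h3 : ∀ ε ∈ I, ∀ ω ∈ Ω', ∀ n : ℕ, ‖iterOp σ Lw ε n ω‖ ≤ C)
    (h4 : ∀ ε ∈ I, ∀ ω ∈ Ω', ∀ h : Bs, ψ (ιw (L ω ε h)) = ψ (ιw h))
    {Bss : Type*} [NormedAddCommGroup Bss] [NormedSpace ℝ Bss] [CompleteSpace Bss]
    [MeasurableSpace Bss] [BorelSpace Bss]
    (ιs : Bss →ₗ[ℝ] Bs) (hιs_inj : Function.Injective ιs)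
    (hιs_norm : ∀ h : Bss, ‖ιs h‖ ≤ ‖h‖)
    (Lss : Ω → ℝ → (Bss →L[ℝ] Bss))
    (hcompat_ss : ∀ (ω : Ω) (ε : ℝ) (h : Bss), ιs (Lss ω ε h) = L ω ε (ιs h))
    (hmeas_ss : ∀ ε ∈ I, ∀ h : Bss, Measurable fun ω => Lss ω ε h)
    (h1011 : ∀ ω ∈ Ω', ∀ n : ℕ, ∀ h : Bss, ψ (ιw (ιs h)) = 0 →
      ‖iterOp σ Lss 0 n ω h‖ ≤ D * Real.exp (-lam * n) * ‖h‖)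
    (h1x : ∀ ε ∈ I, ∀ ω ∈ Ω', ∀ n : ℕ, ∀ h : Bss,
      ‖iterOp σ Lss ε n ω h‖ ≤ C * lam1 ^ n * ‖h‖ + C * ‖ιs h‖)
    (h2x : ∀ ε ∈ I, ∀ ω ∈ Ω', ∀ h : Bss,
      ‖L ω ε (ιs h) - L ω 0 (ιs h)‖ ≤ C * |ε| * ‖h‖)
    (ε₀ D' lam' : ℝ) (hε₀ : 0 < ε₀) (hD' : 0 < D') (hlam' : 0 < lam')
    (hdec'ss : ∀ ε ∈ I, |ε| ≤ ε₀ → ∀ ω ∈ Ω', ∀ n : ℕ, ∀ h : Bss, ψ (ιw (ιs h)) = 0 →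
      ‖iterOp σ Lss ε n ω h‖ ≤ D' * Real.exp (-lam' * n) * ‖h‖)
    (hdec's : ∀ ε ∈ I, |ε| ≤ ε₀ → ∀ ω ∈ Ω', ∀ n : ℕ, ∀ h : Bs, ψ (ιw h) = 0 →
      ‖iterOp σ L ε n ω h‖ ≤ D' * Real.exp (-lam' * n) * ‖h‖)
    (h3x : ∀ ω ∈ Ω', ∀ n : ℕ, ∀ h : Bw, ψ h = 0 →
      ‖iterOp σ Lw 0 n ω h‖ ≤ D' * Real.exp (-lam' * n) * ‖h‖)
    (Lhat : Ω → (Bss →L[ℝ] Bs)) (Lhatw : Ω → (Bs →L[ℝ] Bw))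
    (hLhat_compat : ∀ ω ∈ Ω', ∀ h : Bss, Lhatw ω (ιs h) = ιw (Lhat ω h))
    (hqx : ∃ K : ℝ, ∀ ω ∈ Ω', ‖Lhat ω‖ ≤ K ∧ ‖Lhatw ω‖ ≤ K)
    (α : ℝ → ℝ) (hα_nonneg : ∀ ε ∈ I, 0 ≤ α ε)
    (hα_lim : Tendsto α (nhdsWithin 0 (I \ {0})) (nhds 0))
    (hlim : ∀ ε ∈ I, ε ≠ 0 → ∀ ω ∈ Ω', ∀ h : Bss,
      ‖(1 / ε) • (ιw (L ω ε (ιs h)) - ιw (L ω 0 (ιs h))) - ιw (Lhat ω h)‖ ≤ α ε * ‖h‖)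
    (hfun : ℝ → Ω → Bss)
    (hfam : ∀ ε ∈ I, |ε| ≤ ε₀ →
      Measurable (hfun ε) ∧ (∃ M : ℝ, ∀ ω ∈ Ω', ‖hfun ε ω‖ ≤ M) ∧
      (∀ ω ∈ Ω', ψ (ιw (ιs (hfun ε ω))) = 1) ∧
      (∀ ω ∈ Ω', Lss ω ε (hfun ε ω) = hfun ε (σ ω)))
    :
    (∀ ω ∈ Ω',
      Summable (fun j : ℕ =>
        ‖iterOp σ L 0 j (σinv^[j] ω) (Lhat (σinv^[j + 1] ω) (hfun 0 (σinv^[j + 1] ω)))‖) ∧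
      ψ (ιw (∑' j : ℕ,
        iterOp σ L 0 j (σinv^[j] ω) (Lhat (σinv^[j + 1] ω) (hfun 0 (σinv^[j + 1] ω))))) = 0) ∧
    ∃ M : ℝ, ∀ ω ∈ Ω',
      ‖∑' j : ℕ,
        iterOp σ L 0 j (σinv^[j] ω) (Lhat (σinv^[j + 1] ω) (hfun 0 (σinv^[j + 1] ω)))‖ ≤ M := by
  -- begin proof
  have h0I : (0:ℝ) ∈ I := mem_of_mem_nhds hI
  obtain ⟨K, hK⟩ := hqx
  obtain ⟨_, ⟨Mh, hMh⟩, _, _⟩ := hfam 0 h0I (by simpa using hε₀.le)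
  -- Ω' is invariant under σinv
  have hinv : ∀ ω ∈ Ω', σinv ω ∈ Ω' := by
    intro ω hω
    have := hσinv₂ ω
    exact (hΩ'inv (σinv ω)).mpr (by rwa [this])
  have hmem : ∀ ω ∈ Ω', ∀ j : ℕ, σinv^[j] ω ∈ Ω' := by
    intro ω hω j
    induction j with
    | zero => simpa using hω
    | succ n ih => rw [Function.iterate_succ_apply']; exact hinv _ ih
  -- ψ ∘ ιw is preserved by iterates
  have hψiter : ∀ ε ∈ I, ∀ ω ∈ Ω', ∀ n : ℕ, ∀ h : Bs,
      ψ (ιw (iterOp σ L ε n ω h)) = ψ (ιw h) := by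
    intro ε hε ω hω n
    induction n generalizing ω with
    | zero => intro h; simp [iterOp]
    | succ n ih =>
      intro h
      have : iterOp σ L ε (n+1) ω h = iterOp σ L ε n (σ ω) (L ω ε h) := rfl
      rw [this, ih (σ ω) ((hΩ'inv ω).mp hω), h4 ε hε ω hω]
  -- punctured neighborhood filter is nontrivial
  have hne : (nhdsWithin (0:ℝ) (I \ {0})).NeBot := by
    have hset : I \ {0} = {(0:ℝ)}ᶜ ∩ I := by rw [Set.diff_eq, Set.inter_comm]
    rw [hset, ← nhdsWithin_restrict' _ hI]
    exact inferInstance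
  -- key : ψ (ιw (Lhat ω h)) = 0
  have key : ∀ ω ∈ Ω', ∀ h : Bss, ψ (ιw (Lhat ω h)) = 0 := by
    intro ω hω h
    have hbound : ∀ ε ∈ I \ {0}, |ψ (ιw (Lhat ω h))| ≤ ‖ψ‖ * (α ε * ‖h‖) := by
      intro ε hε
      obtain ⟨hεI, hε0'⟩ := hε
      have hε0 : ε ≠ 0 := hε0'
      have hdiff := hlim ε hεI hε0 ω hω h
      have hψd : ψ ((1/ε) • (ιw (L ω ε (ιs h)) - ιw (L ω 0 (ιs h)))) = 0 := by
        rw [_root_.map_smul, map_sub, h4 ε hεI ω hω, h4 0 h0I ω hω]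
        simp
      have h1 : |ψ (ιw (Lhat ω h))| =
          ‖ψ ((1/ε) • (ιw (L ω ε (ιs h)) - ιw (L ω 0 (ιs h))) - ιw (Lhat ω h))‖ := by
        rw [map_sub, hψd]
        simp [Real.norm_eq_abs, abs_neg]
      rw [h1]
      calc ‖ψ ((1/ε) • (ιw (L ω ε (ιs h)) - ιw (L ω 0 (ιs h))) - ιw (Lhat ω h))‖
          ≤ ‖ψ‖ * ‖(1/ε) • (ιw (L ω ε (ιs h)) - ιw (L ω 0 (ιs h))) - ιw (Lhat ω h)‖ :=
            ψ.le_opNorm _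
        _ ≤ ‖ψ‖ * (α ε * ‖h‖) := by
            exact mul_le_mul_of_nonneg_left hdiff (norm_nonneg ψ)
    have htend : Tendsto (fun ε => ‖ψ‖ * (α ε * ‖h‖)) (nhdsWithin 0 (I \ {0})) (nhds 0) := by
      have := (hα_lim.mul_const ‖h‖).const_mul ‖ψ‖
      simpa using this
    have hev : ∀ᶠ ε in nhdsWithin (0:ℝ) (I \ {0}), |ψ (ιw (Lhat ω h))| ≤ ‖ψ‖ * (α ε * ‖h‖) :=
      eventually_mem_nhdsWithin.mono fun ε hε => hbound ε hε
    have : |ψ (ιw (Lhat ω h))| ≤ 0 := ge_of_tendsto htend hev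
    exact abs_eq_zero.mp (le_antisymm this (abs_nonneg _))
  -- bound on the "source" vectors
  set r : ℝ := Real.exp (-lam) with hr
  have hr0 : 0 ≤ r := (Real.exp_pos _).le
  have hr1 : r < 1 := Real.exp_lt_one_iff.mpr (by linarith)
  have hKMh : ∀ ω ∈ Ω', ‖Lhat (σinv ω) (hfun 0 (σinv ω))‖ ≤ K * Mh := by
    intro ω hω
    have hω' : σinv ω ∈ Ω' := hinv ω hω
    calc ‖Lhat (σinv ω) (hfun 0 (σinv ω))‖
        ≤ ‖Lhat (σinv ω)‖ * ‖hfun 0 (σinv ω)‖ := (Lhat (σinv ω)).le_opNorm _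
      _ ≤ K * Mh :=
          mul_le_mul ((hK _ hω').1) (hMh _ hω') (norm_nonneg _)
            (le_trans (norm_nonneg _) (hK _ hω').1)
  -- term bound
  have hterm : ∀ ω ∈ Ω', ∀ j : ℕ,
      ‖iterOp σ L 0 j (σinv^[j] ω) (Lhat (σinv^[j + 1] ω) (hfun 0 (σinv^[j + 1] ω)))‖
        ≤ (D * (K * Mh)) * r ^ j := by
    intro ω hω j
    have hj : σinv^[j] ω ∈ Ω' := hmem ω hω j
    have hψ0 : ψ (ιw (Lhat (σinv^[j+1] ω) (hfun 0 (σinv^[j+1] ω)))) = 0 :=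
      key _ (hmem ω hω (j+1)) _
    have h1 := hdec _ hj j _ hψ0
    have h2' : ‖Lhat (σinv^[j+1] ω) (hfun 0 (σinv^[j+1] ω))‖ ≤ K * Mh := by
      rw [Function.iterate_succ_apply']
      exact hKMh _ hj
    have hrpow : Real.exp (-lam * j) = r ^ j := by
      rw [hr, ← Real.exp_nat_mul, mul_comm]
    calc ‖iterOp σ L 0 j (σinv^[j] ω) (Lhat (σinv^[j + 1] ω) (hfun 0 (σinv^[j + 1] ω)))‖
        ≤ D * Real.exp (-lam * j) * ‖Lhat (σinv^[j+1] ω) (hfun 0 (σinv^[j+1] ω))‖ := h1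
      _ ≤ D * Real.exp (-lam * j) * (K * Mh) :=
          mul_le_mul_of_nonneg_left h2'
            (mul_nonneg hD.le (Real.exp_pos _).le)
      _ = (D * (K * Mh)) * r ^ j := by rw [hrpow]; ring
  have hgeo : Summable (fun j : ℕ => (D * (K * Mh)) * r ^ j) :=
    (summable_geometric_of_lt_one hr0 hr1).mul_left _
  have hsumnorm : ∀ ω ∈ Ω',
      Summable (fun j : ℕ =>
        ‖iterOp σ L 0 j (σinv^[j] ω) (Lhat (σinv^[j + 1] ω) (hfun 0 (σinv^[j + 1] ω)))‖) := by
    intro ω hω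
    exact Summable.of_nonneg_of_le (fun j => norm_nonneg _) (hterm ω hω) hgeo
  refine ⟨fun ω hω => ⟨hsumnorm ω hω, ?_⟩, ⟨∑' j : ℕ, (D * (K * Mh)) * r ^ j, fun ω hω => ?_⟩⟩
  · -- ψ of the sum is zero
    have hsum : Summable (fun j : ℕ =>
        iterOp σ L 0 j (σinv^[j] ω) (Lhat (σinv^[j + 1] ω) (hfun 0 (σinv^[j + 1] ω)))) :=
      (hsumnorm ω hω).of_norm
    set Ψ : Bs →L[ℝ] ℝ :=
      ψ.comp (LinearMap.mkContinuous ιw 1 (fun h => by simpa using hιw_norm h)) with hΨ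
    have hΨapp : ∀ x : Bs, Ψ x = ψ (ιw x) := fun x => rfl
    rw [show ψ (ιw (∑' j : ℕ,
        iterOp σ L 0 j (σinv^[j] ω) (Lhat (σinv^[j + 1] ω) (hfun 0 (σinv^[j + 1] ω)))))
        = Ψ (∑' j : ℕ,
        iterOp σ L 0 j (σinv^[j] ω) (Lhat (σinv^[j + 1] ω) (hfun 0 (σinv^[j + 1] ω)))) from rfl]
    rw [Ψ.map_tsum hsum]
    have : ∀ j : ℕ, Ψ (iterOp σ L 0 j (σinv^[j] ω)
        (Lhat (σinv^[j + 1] ω) (hfun 0 (σinv^[j + 1] ω)))) = 0 := by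
      intro j
      rw [hΨapp, hψiter 0 h0I _ (hmem ω hω j) j _]
      exact key _ (hmem ω hω (j+1)) _
    rw [tsum_congr this, tsum_zero]
  · -- uniform bound
    calc ‖∑' j : ℕ,
          iterOp σ L 0 j (σinv^[j] ω) (Lhat (σinv^[j + 1] ω) (hfun 0 (σinv^[j + 1] ω)))‖
        ≤ ∑' j : ℕ,
          ‖iterOp σ L 0 j (σinv^[j] ω) (Lhat (σinv^[j + 1] ω) (hfun 0 (σinv^[j + 1] ω)))‖ :=
          norm_tsum_le_tsum_norm (hsumnorm ω hω)
      _ ≤ ∑' j : ℕ, (D * (K * Mh)) * r ^ j :=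
          Summable.tsum_le_tsum (hterm ω hω) (hsumnorm ω hω) hgeo
end
end

section
/- For every ε ∈ I with |ε| ≤ ε₀ and every ω ∈ Ω', the identity h_ω^ε − h_ω = Σ_{j=0}^∞ L_{σ^{−j}ω}^j (L_{σ^{−(j+1)}ω,ε} − L_{σ^{−(j+1)}ω}) h_{σ^{−(j+1)}ω}^ε holds, the series converging absolutely in B_s. -/
open MeasureTheory Filter Topology

noncomputable section

lemma iterOp_succ {Ω B : Type*} [NormedAddCommGroup B] [NormedSpace ℝ B]
    (σ : Ω → Ω) (L : Ω → ℝ → (B →L[ℝ] B)) (ε : ℝ) (n : ℕ) (ω : Ω) :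
    iterOp σ L ε (n + 1) ω = iterOp σ L ε n (σ ω) ∘L L ω ε := rfl

lemma iterOp_zero {Ω B : Type*} [NormedAddCommGroup B] [NormedSpace ℝ B]
    (σ : Ω → Ω) (L : Ω → ℝ → (B →L[ℝ] B)) (ε : ℝ) (ω : Ω) :
    iterOp σ L ε 0 ω = ContinuousLinearMap.id ℝ B := rfl

theorem stmt_13
    {Ω : Type*} [MeasurableSpace Ω] (P : Measure Ω) [IsProbabilityMeasure P]
    (σ σinv : Ω → Ω)
    (hσinv₁ : Function.LeftInverse σinv σ) (hσinv₂ : Function.RightInverse σinv σ)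
    (hσinvmeas : Measurable σinv)
    (hσerg : Ergodic σ P)
    {Bs Bw : Type*}
    [NormedAddCommGroup Bs] [NormedSpace ℝ Bs] [CompleteSpace Bs]
    [NormedAddCommGroup Bw] [NormedSpace ℝ Bw] [CompleteSpace Bw]
    [MeasurableSpace Bs] [BorelSpace Bs]
    (ιw : Bs →ₗ[ℝ] Bw) (hιw_inj : Function.Injective ιw)
    (hιw_norm : ∀ h : Bs, ‖ιw h‖ ≤ ‖h‖)
    (ψ : Bw →L[ℝ] ℝ) (hψ_ne : ∃ g : Bs, ψ (ιw g) ≠ 0)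
    (I : Set ℝ) (hI : I ∈ nhds (0 : ℝ))
    (L : Ω → ℝ → (Bs →L[ℝ] Bs)) (Lw : Ω → ℝ → (Bw →L[ℝ] Bw))
    (hcompat : ∀ (ω : Ω) (ε : ℝ) (h : Bs), ιw (L ω ε h) = Lw ω ε (ιw h))
    (hmeas : ∀ ε ∈ I, ∀ h : Bs, Measurable fun ω => L ω ε h)
    (D lam C lam1 : ℝ) (hD : 0 < D) (hlam : 0 < lam) (hC : 0 < C)
    (hlam1 : lam1 ∈ Set.Ioo (0 : ℝ) 1)
    (Ω' : Set Ω) (hΩ'meas : MeasurableSet Ω') (hΩ'full : P Ω' = 1)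
    (hΩ'inv : ∀ ω, ω ∈ Ω' ↔ σ ω ∈ Ω')
    (hdec : ∀ ω ∈ Ω', ∀ n : ℕ, ∀ h : Bs, ψ (ιw h) = 0 →
      ‖iterOp σ L 0 n ω h‖ ≤ D * Real.exp (-lam * n) * ‖h‖)
    (h1 : ∀ ε ∈ I, ∀ ω ∈ Ω', ∀ n : ℕ, ∀ h : Bs,
      ‖iterOp σ L ε n ω h‖ ≤ C * lam1 ^ n * ‖h‖ + C * ‖ιw h‖)
    (h2 : ∀ ε ∈ I, ∀ ω ∈ Ω', ∀ h : Bs,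
      ‖ιw (L ω ε h) - ιw (L ω 0 h)‖ ≤ C * |ε| * ‖h‖)
    (h3 : ∀ ε ∈ I, ∀ ω ∈ Ω', ∀ n : ℕ, ‖iterOp σ Lw ε n ω‖ ≤ C)
    (h4 : ∀ ε ∈ I, ∀ ω ∈ Ω', ∀ h : Bs, ψ (ιw (L ω ε h)) = ψ (ιw h))
    {Bss : Type*} [NormedAddCommGroup Bss] [NormedSpace ℝ Bss] [CompleteSpace Bss]
    [MeasurableSpace Bss] [BorelSpace Bss]
    (ιs : Bss →ₗ[ℝ] Bs) (hιs_inj : Function.Injective ιs)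
    (hιs_norm : ∀ h : Bss, ‖ιs h‖ ≤ ‖h‖)
    (Lss : Ω → ℝ → (Bss →L[ℝ] Bss))
    (hcompat_ss : ∀ (ω : Ω) (ε : ℝ) (h : Bss), ιs (Lss ω ε h) = L ω ε (ιs h))
    (hmeas_ss : ∀ ε ∈ I, ∀ h : Bss, Measurable fun ω => Lss ω ε h)
    (h1011 : ∀ ω ∈ Ω', ∀ n : ℕ, ∀ h : Bss, ψ (ιw (ιs h)) = 0 →
      ‖iterOp σ Lss 0 n ω h‖ ≤ D * Real.exp (-lam * n) * ‖h‖)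
    (h1x : ∀ ε ∈ I, ∀ ω ∈ Ω', ∀ n : ℕ, ∀ h : Bss,
      ‖iterOp σ Lss ε n ω h‖ ≤ C * lam1 ^ n * ‖h‖ + C * ‖ιs h‖)
    (h2x : ∀ ε ∈ I, ∀ ω ∈ Ω', ∀ h : Bss,
      ‖L ω ε (ιs h) - L ω 0 (ιs h)‖ ≤ C * |ε| * ‖h‖)
    (ε₀ D' lam' : ℝ) (hε₀ : 0 < ε₀) (hD' : 0 < D') (hlam' : 0 < lam')
    (hdec'ss : ∀ ε ∈ I, |ε| ≤ ε₀ → ∀ ω ∈ Ω', ∀ n : ℕ, ∀ h : Bss, ψ (ιw (ιs h)) = 0 →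
      ‖iterOp σ Lss ε n ω h‖ ≤ D' * Real.exp (-lam' * n) * ‖h‖)
    (hdec's : ∀ ε ∈ I, |ε| ≤ ε₀ → ∀ ω ∈ Ω', ∀ n : ℕ, ∀ h : Bs, ψ (ιw h) = 0 →
      ‖iterOp σ L ε n ω h‖ ≤ D' * Real.exp (-lam' * n) * ‖h‖)
    (hfun : ℝ → Ω → Bss)
    (hfam : ∀ ε ∈ I, |ε| ≤ ε₀ →
      Measurable (hfun ε) ∧ (∃ M : ℝ, ∀ ω ∈ Ω', ‖hfun ε ω‖ ≤ M) ∧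
      (∀ ω ∈ Ω', ψ (ιw (ιs (hfun ε ω))) = 1) ∧
      (∀ ω ∈ Ω', Lss ω ε (hfun ε ω) = hfun ε (σ ω)))
    :
    ∀ ε ∈ I, |ε| ≤ ε₀ → ∀ ω ∈ Ω',
      Summable (fun j : ℕ =>
        ‖iterOp σ L 0 j (σinv^[j] ω)
          (L (σinv^[j + 1] ω) ε (ιs (hfun ε (σinv^[j + 1] ω))) -
            L (σinv^[j + 1] ω) 0 (ιs (hfun ε (σinv^[j + 1] ω))))‖) ∧
      ιs (hfun ε ω) - ιs (hfun 0 ω) =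
        ∑' j : ℕ,
          iterOp σ L 0 j (σinv^[j] ω)
            (L (σinv^[j + 1] ω) ε (ιs (hfun ε (σinv^[j + 1] ω))) -
              L (σinv^[j + 1] ω) 0 (ιs (hfun ε (σinv^[j + 1] ω)))) := by
  intro ε hεI hεε₀ ω hω
  have h0I : (0 : ℝ) ∈ I := mem_of_mem_nhds hI
  obtain ⟨-, ⟨Mε, hMε⟩, hψε, hequivε⟩ := hfam ε hεI hεε₀
  obtain ⟨-, ⟨M0, hM0⟩, hψ0, hequiv0⟩ := hfam 0 h0I (by simpa using hε₀.le)
  -- membership of backward orbit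
  have hshift : ∀ k : ℕ, σ (σinv^[k + 1] ω) = σinv^[k] ω := by
    intro k
    rw [Function.iterate_succ_apply' σinv k ω]
    exact hσinv₂ _
  have hmem : ∀ k : ℕ, σinv^[k] ω ∈ Ω' := by
    intro k
    induction k with
    | zero => simpa using hω
    | succ k ih =>
      rw [hΩ'inv (σinv^[k + 1] ω), hshift k]
      exact ih
  -- the summand
  set F : ℕ → Bs := fun j =>
    iterOp σ L 0 j (σinv^[j] ω)
      (L (σinv^[j + 1] ω) ε (ιs (hfun ε (σinv^[j + 1] ω))) -
        L (σinv^[j + 1] ω) 0 (ιs (hfun ε (σinv^[j + 1] ω)))) with hF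
  have hψv : ∀ j : ℕ,
      ψ (ιw (L (σinv^[j + 1] ω) ε (ιs (hfun ε (σinv^[j + 1] ω))) -
        L (σinv^[j + 1] ω) 0 (ιs (hfun ε (σinv^[j + 1] ω))))) = 0 := by
    intro j
    rw [map_sub, map_sub, h4 ε hεI _ (hmem (j + 1)), h4 0 h0I _ (hmem (j + 1)), sub_self]
  have hMε0 : 0 ≤ Mε := le_trans (norm_nonneg _) (hMε ω hω)
  have hr0 : (0 : ℝ) ≤ Real.exp (-lam) := (Real.exp_pos _).le
  have hr1 : Real.exp (-lam) < 1 := by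
    have := Real.exp_lt_exp.mpr (show -lam < 0 by linarith)
    simpa using this
  have hvbound : ∀ j : ℕ,
      ‖L (σinv^[j + 1] ω) ε (ιs (hfun ε (σinv^[j + 1] ω))) -
        L (σinv^[j + 1] ω) 0 (ιs (hfun ε (σinv^[j + 1] ω)))‖ ≤ C * |ε| * Mε := by
    intro j
    refine le_trans (h2x ε hεI _ (hmem (j + 1)) _) ?_
    have := hMε _ (hmem (j + 1))
    have hCε : 0 ≤ C * |ε| := mul_nonneg hC.le (abs_nonneg _)
    exact mul_le_mul_of_nonneg_left this hCε
  have hFbound : ∀ j : ℕ, ‖F j‖ ≤ (D * (C * |ε| * Mε)) * Real.exp (-lam) ^ j := by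
    intro j
    have h₁ := hdec _ (hmem j) j _ (hψv j)
    refine le_trans h₁ ?_
    have h₂ := hvbound j
    have hexp : Real.exp (-lam * j) = Real.exp (-lam) ^ j := by
      rw [mul_comm, Real.exp_nat_mul]
    calc D * Real.exp (-lam * j) *
          ‖L (σinv^[j + 1] ω) ε (ιs (hfun ε (σinv^[j + 1] ω))) -
            L (σinv^[j + 1] ω) 0 (ιs (hfun ε (σinv^[j + 1] ω)))‖
        ≤ D * Real.exp (-lam * j) * (C * |ε| * Mε) := by
          exact mul_le_mul_of_nonneg_left h₂
            (mul_nonneg hD.le (Real.exp_pos _).le)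
      _ = (D * (C * |ε| * Mε)) * Real.exp (-lam) ^ j := by rw [hexp]; ring
  have hsum : Summable fun j : ℕ => ‖F j‖ := by
    refine Summable.of_nonneg_of_le (fun j => norm_nonneg _) hFbound ?_
    exact (summable_geometric_of_lt_one hr0 hr1).mul_left _
  refine ⟨hsum, ?_⟩
  -- telescoping
  set A : ℕ → Bs := fun n =>
    iterOp σ L 0 n (σinv^[n] ω) (ιs (hfun ε (σinv^[n] ω))) with hA
  have hstepε : ∀ k : ℕ,
      L (σinv^[k + 1] ω) ε (ιs (hfun ε (σinv^[k + 1] ω))) = ιs (hfun ε (σinv^[k] ω)) := by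
    intro k
    rw [← hcompat_ss, hequivε _ (hmem (k + 1)), hshift k]
  have hstep0 : ∀ k : ℕ,
      L (σinv^[k + 1] ω) 0 (ιs (hfun 0 (σinv^[k + 1] ω))) = ιs (hfun 0 (σinv^[k] ω)) := by
    intro k
    rw [← hcompat_ss, hequiv0 _ (hmem (k + 1)), hshift k]
  have hFA : ∀ j : ℕ, F j = A j - A (j + 1) := by
    intro j
    have h1' : A j = iterOp σ L 0 j (σinv^[j] ω)
        (L (σinv^[j + 1] ω) ε (ιs (hfun ε (σinv^[j + 1] ω)))) := by
      rw [hstepε j]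
    have h2' : A (j + 1) = iterOp σ L 0 j (σinv^[j] ω)
        (L (σinv^[j + 1] ω) 0 (ιs (hfun ε (σinv^[j + 1] ω)))) := by
      show (iterOp σ L 0 (j + 1) (σinv^[j + 1] ω)) _ = _
      rw [iterOp_succ, hshift j]
      rfl
    rw [h1', h2', hF, ← map_sub]
  have hB : ∀ n : ℕ,
      iterOp σ L 0 n (σinv^[n] ω) (ιs (hfun 0 (σinv^[n] ω))) = ιs (hfun 0 ω) := by
    intro n
    induction n with
    | zero => rfl
    | succ n ih =>
      rw [iterOp_succ, hshift n]
      show iterOp σ L 0 n (σinv^[n] ω) (L (σinv^[n + 1] ω) 0 (ιs (hfun 0 (σinv^[n + 1] ω)))) = _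
      rw [hstep0 n]
      exact ih
  have hA0 : A 0 = ιs (hfun ε ω) := rfl
  -- the remainder
  have hRnorm : ∀ n : ℕ, ‖A n - ιs (hfun 0 ω)‖ ≤ (D * (Mε + M0)) * Real.exp (-lam) ^ n := by
    intro n
    have hrew : A n - ιs (hfun 0 ω)
        = iterOp σ L 0 n (σinv^[n] ω) (ιs (hfun ε (σinv^[n] ω)) - ιs (hfun 0 (σinv^[n] ω))) := by
      rw [map_sub, hB n]
    have hψz : ψ (ιw (ιs (hfun ε (σinv^[n] ω)) - ιs (hfun 0 (σinv^[n] ω)))) = 0 := by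
      rw [map_sub, map_sub, hψε _ (hmem n), hψ0 _ (hmem n), sub_self]
    have h₁ := hdec _ (hmem n) n _ hψz
    rw [hrew]
    refine le_trans h₁ ?_
    have hnb : ‖ιs (hfun ε (σinv^[n] ω)) - ιs (hfun 0 (σinv^[n] ω))‖ ≤ Mε + M0 := by
      refine le_trans (norm_sub_le _ _) ?_
      exact add_le_add (le_trans (hιs_norm _) (hMε _ (hmem n)))
        (le_trans (hιs_norm _) (hM0 _ (hmem n)))
    have hexp : Real.exp (-lam * n) = Real.exp (-lam) ^ n := by
      rw [mul_comm, Real.exp_nat_mul]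
    calc D * Real.exp (-lam * n) * ‖ιs (hfun ε (σinv^[n] ω)) - ιs (hfun 0 (σinv^[n] ω))‖
        ≤ D * Real.exp (-lam * n) * (Mε + M0) :=
          mul_le_mul_of_nonneg_left hnb (mul_nonneg hD.le (Real.exp_pos _).le)
      _ = (D * (Mε + M0)) * Real.exp (-lam) ^ n := by rw [hexp]; ring
  have hRtend : Tendsto (fun n : ℕ => A n - ιs (hfun 0 ω)) atTop (𝓝 0) := by
    rw [tendsto_zero_iff_norm_tendsto_zero]
    refine squeeze_zero (fun n => norm_nonneg _) hRnorm ?_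
    have := (tendsto_pow_atTop_nhds_zero_of_lt_one hr0 hr1).const_mul (D * (Mε + M0))
    simpa using this
  have hpartial : ∀ n : ℕ, ∑ j ∈ Finset.range n, F j
      = (ιs (hfun ε ω) - ιs (hfun 0 ω)) - (A n - ιs (hfun 0 ω)) := by
    intro n
    calc ∑ j ∈ Finset.range n, F j = ∑ j ∈ Finset.range n, (A j - A (j + 1)) := by
          exact Finset.sum_congr rfl fun j _ => hFA j
      _ = A 0 - A n := Finset.sum_range_sub' A n
      _ = (ιs (hfun ε ω) - ιs (hfun 0 ω)) - (A n - ιs (hfun 0 ω)) := by rw [hA0]; abel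
  have htend2 : Tendsto (fun n : ℕ => ∑ j ∈ Finset.range n, F j) atTop
      (𝓝 (ιs (hfun ε ω) - ιs (hfun 0 ω))) := by
    have h' : Tendsto (fun n : ℕ => (ιs (hfun ε ω) - ιs (hfun 0 ω)) - (A n - ιs (hfun 0 ω)))
        atTop (𝓝 ((ιs (hfun ε ω) - ιs (hfun 0 ω)) - 0)) := tendsto_const_nhds.sub hRtend
    rw [sub_zero] at h'
    exact h'.congr fun n => (hpartial n).symm
  have htend1 := (Summable.of_norm hsum).hasSum.tendsto_sum_nat
  exact tendsto_nhds_unique htend2 htend1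
end
end

section
/- Theorem 3.7 (quenched linear response): lim_{ε→0} sup_{ω∈Ω'} ‖ (1/ε)(h_ω^ε − h_ω) − ĥ_ω ‖_w = 0, i.e. the map ε ↦ (h_ω^ε)_{ω∈Ω'} is differentiable at ε = 0 in L^∞(Ω', B_w), with derivative (ĥ_ω)_{ω∈Ω'}. -/
/-!
Telescoping along the backward orbit `σ⁻ʲ ω` writes `h^ε_ω - h_ω` as the series
`∑ⱼ L_ω^{(j)} (L_ε - L) h^ε` of propagated one-step perturbations: the remainder
`L^{(n)} (h^ε - h)` lies in `ker ψ` and so decays exponentially. Together with the bound on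
`‖h^ε‖_ss` uniform in `ε` (the same argument, comparing `h^ε` with the `L_ε`-orbit of `h`), this
gives `‖h^ε - h‖_s = O(ε)`. Subtracting the series defining `ĥ` term by term, the `j`-th term of
`(1/ε)(h^ε - h) - ĥ` is `L^{(j)}` applied to a vector of `ker ψ` of weak norm at most
`α(ε) ‖h^ε‖_ss + ‖L̂‖ ‖h^ε - h‖_s`, and the weak decay (3x) sums these to `O(α(ε) + |ε|)`.
-/

open MeasureTheory Filter Topology

noncomputable section

theorem hasSum_of_eq_add_of_tendsto_zero {E : Type*} [NormedAddCommGroup E] {A F : ℕ → E}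
    (hF : Summable F) (hA : Tendsto A atTop (𝓝 0)) (h : ∀ n, A n = A (n + 1) + F n) :
    HasSum F (A 0) := by
  have hpartial : ∀ n, ∑ j ∈ Finset.range n, F j = A 0 - A n := by
    intro n
    induction n with
    | zero => simp
    | succ n ih => rw [Finset.sum_range_succ, ih, h n]; abel
  have hlim : Tendsto (fun n => ∑ j ∈ Finset.range n, F j) atTop (𝓝 (A 0)) := by
    simpa [hpartial] using (tendsto_const_nhds (x := A 0)).sub hA
  rw [← tendsto_nhds_unique hF.hasSum.tendsto_sum_nat hlim]
  exact hF.hasSum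

theorem exists_pos_forall_mul_add_mul_abs_le {α : ℝ → ℝ} {s : Set ℝ}
    (hα : Tendsto α (𝓝[s] 0) (𝓝 0)) (A B : ℝ) {δ : ℝ} (hδ : 0 < δ) :
    ∃ η > 0, ∀ ε ∈ s, |ε| ≤ η → A * α ε + B * |ε| ≤ δ := by
  have habs : Tendsto (fun ε : ℝ => |ε|) (𝓝[s] 0) (𝓝 0) := by
    simpa using (continuous_abs.tendsto (0 : ℝ)).mono_left nhdsWithin_le_nhds
  have hlim : Tendsto (fun ε => A * α ε + B * |ε|) (𝓝[s] 0) (𝓝 0) := by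
    simpa using (hα.const_mul A).add (habs.const_mul B)
  obtain ⟨η, hη, hη'⟩ := Metric.tendsto_nhdsWithin_nhds.1 hlim δ hδ
  refine ⟨η / 2, half_pos hη, fun ε hε hεη => ?_⟩
  have := hη' hε (by rw [Real.dist_eq, sub_zero]; linarith)
  rw [Real.dist_eq, sub_zero] at this
  exact (le_abs_self _).trans this.le

theorem ContinuousLinearMap.map_eq_zero_of_norm_sub_le {E : Type*} [NormedAddCommGroup E]
    [NormedSpace ℝ E] (φ : E →L[ℝ] ℝ) {l : Filter ℝ} [l.NeBot] {f : ℝ → E} {g : E}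
    {α : ℝ → ℝ} {c : ℝ} (hα : Tendsto α l (𝓝 0)) (hf : ∀ᶠ ε in l, φ (f ε) = 0)
    (hfg : ∀ᶠ ε in l, ‖f ε - g‖ ≤ α ε * c) : φ g = 0 := by
  have hlim : Tendsto f l (𝓝 g) := by
    rw [tendsto_iff_norm_sub_tendsto_zero]
    exact squeeze_zero' (Eventually.of_forall fun _ => norm_nonneg _) hfg
      (by simpa using hα.mul_const c)
  exact (φ.isClosed_ker.mem_of_tendsto hlim hf :)

theorem norm_smul_sub_map_le_add {E₀ E F : Type*} [NormedAddCommGroup E₀] [NormedSpace ℝ E₀]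
    [NormedAddCommGroup E] [NormedSpace ℝ E] [NormedAddCommGroup F] [NormedSpace ℝ F]
    (ι₀ : E₀ →ₗ[ℝ] E) (ι : E →ₗ[ℝ] F) (Lε L₀ : E →L[ℝ] E) (Lhat : E₀ →L[ℝ] E)
    (Lhatw : E →L[ℝ] F) {a b : E₀} (hLhat : ∀ h, Lhatw (ι₀ h) = ι (Lhat h)) (c : ℝ) {A K d : ℝ}
    (ha : ‖c • (ι (Lε (ι₀ a)) - ι (L₀ (ι₀ a))) - ι (Lhat a)‖ ≤ A) (hK : ‖Lhatw‖ ≤ K)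
    (hd : ‖ι₀ a - ι₀ b‖ ≤ d) : ‖c • ι ((Lε - L₀) (ι₀ a)) - ι (Lhat b)‖ ≤ A + K * d := by
  have hsplit : c • ι ((Lε - L₀) (ι₀ a)) - ι (Lhat b) =
      (c • (ι (Lε (ι₀ a)) - ι (L₀ (ι₀ a))) - ι (Lhat a)) + Lhatw (ι₀ a - ι₀ b) := by
    rw [sub_apply, map_sub, map_sub, hLhat, hLhat]
    abel
  rw [hsplit]
  exact (norm_add_le _ _).trans (add_le_add ha (Lhatw.le_of_opNorm_le_of_le hK hd))

theorem Real.exp_neg_mul_nat (a : ℝ) (n : ℕ) : Real.exp (-a * n) = Real.exp (-a) ^ n := by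
  rw [mul_comm, Real.exp_nat_mul]

section Cocycle

variable {Ω B : Type*} [NormedAddCommGroup B] [NormedSpace ℝ B] {σ σinv : Ω → Ω}
  {L : Ω → ℝ → (B →L[ℝ] B)} {ε : ℝ}

theorem iterOp_succ_apply (n : ℕ) (ω : Ω) (h : B) :
    iterOp σ L ε (n + 1) ω h = iterOp σ L ε n (σ ω) (L ω ε h) := rfl

theorem map_iterOp_apply {B' : Type*} [NormedAddCommGroup B'] [NormedSpace ℝ B']
    {L' : Ω → ℝ → (B' →L[ℝ] B')} (J : B →ₗ[ℝ] B')
    (hJ : ∀ ω ε h, J (L ω ε h) = L' ω ε (J h)) (n : ℕ) (ω : Ω) (h : B) :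
    J (iterOp σ L ε n ω h) = iterOp σ L' ε n ω (J h) := by
  induction n generalizing ω h with
  | zero => rfl
  | succ n ih => rw [iterOp_succ_apply, iterOp_succ_apply, ih, hJ]

theorem apply_iterate_succ_of_rightInverse (hσ : Function.RightInverse σinv σ) (n : ℕ)
    (ω : Ω) : σ (σinv^[n + 1] ω) = σinv^[n] ω := by
  rw [Function.iterate_succ_apply', hσ]

variable {S : Set Ω}

theorem iterOp_iterate_apply_of_equivariant (hσ : Function.RightInverse σinv σ)
    (hS : Set.MapsTo σinv S S) {u : Ω → B} (hu : ∀ ω ∈ S, L ω ε (u ω) = u (σ ω)) (n : ℕ)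
    {ω : Ω} (hω : ω ∈ S) : iterOp σ L ε n (σinv^[n] ω) (u (σinv^[n] ω)) = u ω := by
  induction n with
  | zero => rfl
  | succ n ih =>
    rw [iterOp_succ_apply, hu _ (hS.iterate (n + 1) hω), apply_iterate_succ_of_rightInverse hσ,
      ih]

theorem norm_le_of_iterOp_bounded (hσ : Function.RightInverse σinv σ)
    (hS : Set.MapsTo σinv S S) (φ : B →ₗ[ℝ] ℝ) {D q : ℝ} (hD : 0 ≤ D) (hq0 : 0 ≤ q)
    (hq1 : q < 1)
    (hdec : ∀ ω ∈ S, ∀ n (h : B), φ h = 0 → ‖iterOp σ L ε n ω h‖ ≤ D * q ^ n * ‖h‖)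
    {u v : Ω → B} (hu : ∀ ω ∈ S, L ω ε (u ω) = u (σ ω)) (hφ : ∀ ω ∈ S, φ (u ω) = φ (v ω))
    {M K : ℝ} (huv : ∀ ω ∈ S, ‖u ω - v ω‖ ≤ M)
    (hv : ∀ ω ∈ S, ∀ n, ‖iterOp σ L ε n ω (v ω)‖ ≤ K) {ω : Ω} (hω : ω ∈ S) :
    ‖u ω‖ ≤ K := by
  have hle : ∀ n : ℕ, ‖u ω‖ ≤ K + D * q ^ n * M := by
    intro n
    have hx := hS.iterate n hω
    have hsplit : u ω = iterOp σ L ε n (σinv^[n] ω) (v (σinv^[n] ω)) +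
        iterOp σ L ε n (σinv^[n] ω) (u (σinv^[n] ω) - v (σinv^[n] ω)) := by
      rw [map_sub, add_sub_cancel, iterOp_iterate_apply_of_equivariant hσ hS hu n hω]
    rw [hsplit]
    refine (norm_add_le _ _).trans (add_le_add (hv _ hx n) ?_)
    refine (hdec _ hx n _ (by rw [map_sub, hφ _ hx, sub_self])).trans ?_
    gcongr
    exact huv _ hx
  have hlim : Tendsto (fun n : ℕ => K + D * q ^ n * M) atTop (𝓝 K) := by
    simpa using tendsto_const_nhds.add
      (((tendsto_pow_atTop_nhds_zero_of_lt_one hq0 hq1).const_mul D).mul_const M)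
  exact ge_of_tendsto' hlim hle

theorem norm_iterOp_iterate_le (hS : Set.MapsTo σinv S S) (φ : B →ₗ[ℝ] ℝ) {D q : ℝ}
    (hD : 0 ≤ D) (hq0 : 0 ≤ q)
    (hdec : ∀ ω ∈ S, ∀ n (h : B), φ h = 0 → ‖iterOp σ L 0 n ω h‖ ≤ D * q ^ n * ‖h‖)
    {g : Ω → B} {c : ℝ} (hφg : ∀ ω ∈ S, φ (g ω) = 0) (hg : ∀ ω ∈ S, ‖g ω‖ ≤ c) {ω : Ω}
    (hω : ω ∈ S) (j : ℕ) :
    ‖iterOp σ L 0 j (σinv^[j] ω) (g (σinv^[j + 1] ω))‖ ≤ D * c * q ^ j := by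
  have hx := hS.iterate (j + 1) hω
  calc _ ≤ D * q ^ j * ‖g (σinv^[j + 1] ω)‖ := hdec _ (hS.iterate j hω) j _ (hφg _ hx)
    _ ≤ D * q ^ j * c := by gcongr; exact hg _ hx
    _ = D * c * q ^ j := by ring

theorem summable_iterOp_iterate [CompleteSpace B] (hS : Set.MapsTo σinv S S) (φ : B →ₗ[ℝ] ℝ)
    {D q : ℝ} (hD : 0 ≤ D) (hq0 : 0 ≤ q) (hq1 : q < 1)
    (hdec : ∀ ω ∈ S, ∀ n (h : B), φ h = 0 → ‖iterOp σ L 0 n ω h‖ ≤ D * q ^ n * ‖h‖)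
    {g : Ω → B} {c : ℝ} (hφg : ∀ ω ∈ S, φ (g ω) = 0) (hg : ∀ ω ∈ S, ‖g ω‖ ≤ c) {ω : Ω}
    (hω : ω ∈ S) : Summable fun j => iterOp σ L 0 j (σinv^[j] ω) (g (σinv^[j + 1] ω)) :=
  .of_norm_bounded ((summable_geometric_of_lt_one hq0 hq1).mul_left (D * c))
    (norm_iterOp_iterate_le hS φ hD hq0 hdec hφg hg hω)

theorem hasSum_iterOp_perturbation [CompleteSpace B] (hσ : Function.RightInverse σinv σ)
    (hS : Set.MapsTo σinv S S) (φ : B →ₗ[ℝ] ℝ) {D q : ℝ} (hD : 0 ≤ D) (hq0 : 0 ≤ q)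
    (hq1 : q < 1)
    (hdec : ∀ ω ∈ S, ∀ n (h : B), φ h = 0 → ‖iterOp σ L 0 n ω h‖ ≤ D * q ^ n * ‖h‖)
    (hφL : ∀ ω ∈ S, ∀ h, φ ((L ω ε - L ω 0) h) = 0) {u v : Ω → B}
    (hu : ∀ ω ∈ S, L ω ε (u ω) = u (σ ω)) (hv : ∀ ω ∈ S, L ω 0 (v ω) = v (σ ω))
    (hφ : ∀ ω ∈ S, φ (u ω) = φ (v ω)) {M c : ℝ} (huv : ∀ ω ∈ S, ‖u ω - v ω‖ ≤ M)
    (hpert : ∀ ω ∈ S, ‖(L ω ε - L ω 0) (u ω)‖ ≤ c) {ω : Ω} (hω : ω ∈ S) :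
    HasSum (fun j => iterOp σ L 0 j (σinv^[j] ω)
      ((L (σinv^[j + 1] ω) ε - L (σinv^[j + 1] ω) 0) (u (σinv^[j + 1] ω)))) (u ω - v ω) := by
  set A : ℕ → B := fun n => iterOp σ L 0 n (σinv^[n] ω) (u (σinv^[n] ω) - v (σinv^[n] ω))
  set F : ℕ → B := fun j => iterOp σ L 0 j (σinv^[j] ω)
    ((L (σinv^[j + 1] ω) ε - L (σinv^[j + 1] ω) 0) (u (σinv^[j + 1] ω)))
  have hF : Summable F :=
    summable_iterOp_iterate hS φ hD hq0 hq1 hdec (fun x hx => hφL x hx _) hpert hω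
  have hA : Tendsto A atTop (𝓝 0) := by
    refine squeeze_zero_norm (fun n => ?_) (by
      simpa using ((tendsto_pow_atTop_nhds_zero_of_lt_one hq0 hq1).const_mul D).mul_const M)
    have hx := hS.iterate n hω
    refine (hdec _ hx n _ (by rw [map_sub, hφ _ hx, sub_self])).trans ?_
    gcongr
    exact huv _ hx
  have hstep : ∀ n, A n = A (n + 1) + F n := by
    intro n
    have hx := hS.iterate (n + 1) hω
    simp only [A, F, iterOp_succ_apply, apply_iterate_succ_of_rightInverse hσ, ← map_add]
    congr 1
    rw [map_sub, hv _ hx, sub_apply, hu _ hx, apply_iterate_succ_of_rightInverse hσ]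
    abel
  simpa [A, iterOp] using hasSum_of_eq_add_of_tendsto_zero hF hA hstep

theorem norm_smul_sub_tsum_iterOp_le {F : Type*} [NormedAddCommGroup F] [NormedSpace ℝ F]
    {Lw : Ω → ℝ → (F →L[ℝ] F)} (J : B →L[ℝ] F) (hJ : ∀ ω ε h, J (L ω ε h) = Lw ω ε (J h))
    (φ : F →ₗ[ℝ] ℝ) {D q : ℝ} (hD : 0 ≤ D) (hq0 : 0 ≤ q) (hq1 : q < 1) {ω : ℕ → Ω}
    (hdec : ∀ n (h : F), φ h = 0 → ‖iterOp σ Lw 0 n (ω n) h‖ ≤ D * q ^ n * ‖h‖)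
    {p s : ℕ → B} {x : B} (hp : HasSum (fun j => iterOp σ L 0 j (ω j) (p j)) x)
    (hs : Summable fun j => iterOp σ L 0 j (ω j) (s j)) (c : ℝ) {β : ℝ}
    (hφ : ∀ j, φ (c • J (p j) - J (s j)) = 0) (hβ : ∀ j, ‖c • J (p j) - J (s j)‖ ≤ β) :
    ‖c • J x - J (∑' j, iterOp σ L 0 j (ω j) (s j))‖ ≤ D * β * (1 - q)⁻¹ := by
  refine (((hp.mapL J).const_smul c).sub (hs.hasSum.mapL J)).norm_le_of_bounded
    ((hasSum_geometric_of_lt_one hq0 hq1).mul_left (D * β)) fun j => ?_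
  have hJ' := map_iterOp_apply (σ := σ) (ε := 0) J.toLinearMap hJ j (ω j)
  simp only [ContinuousLinearMap.coe_coe] at hJ'
  rw [hJ', hJ', ← map_smul, ← map_sub]
  calc _ ≤ D * q ^ j * ‖c • J (p j) - J (s j)‖ := hdec j _ (hφ j)
    _ ≤ D * q ^ j * β := by gcongr; exact hβ j
    _ = D * β * q ^ j := by ring

end Cocycle

theorem stmt_14_general
    {Ω : Type*} [MeasurableSpace Ω]
    (σ σinv : Ω → Ω)
    (hσinv₂ : Function.RightInverse σinv σ)
    {Bs Bw : Type*}
    [NormedAddCommGroup Bs] [NormedSpace ℝ Bs] [CompleteSpace Bs]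
    [NormedAddCommGroup Bw] [NormedSpace ℝ Bw]
    (ιw : Bs →ₗ[ℝ] Bw)
    (hιw_norm : ∀ h : Bs, ‖ιw h‖ ≤ ‖h‖)
    (ψ : Bw →L[ℝ] ℝ)
    (I : Set ℝ) (hI : I ∈ nhds (0 : ℝ))
    (L : Ω → ℝ → (Bs →L[ℝ] Bs)) (Lw : Ω → ℝ → (Bw →L[ℝ] Bw))
    (hcompat : ∀ (ω : Ω) (ε : ℝ) (h : Bs), ιw (L ω ε h) = Lw ω ε (ιw h))
    (D lam C lam1 : ℝ) (hD : 0 < D) (hlam : 0 < lam) (hC : 0 < C)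
    (hlam1 : lam1 ∈ Set.Ioo (0 : ℝ) 1)
    (Ω' : Set Ω)
    (hΩ'inv : ∀ ω, ω ∈ Ω' ↔ σ ω ∈ Ω')
    (hdec : ∀ ω ∈ Ω', ∀ n : ℕ, ∀ h : Bs, ψ (ιw h) = 0 →
      ‖iterOp σ L 0 n ω h‖ ≤ D * Real.exp (-lam * n) * ‖h‖)
    (h4 : ∀ ε ∈ I, ∀ ω ∈ Ω', ∀ h : Bs, ψ (ιw (L ω ε h)) = ψ (ιw h))
    {Bss : Type*} [NormedAddCommGroup Bss] [NormedSpace ℝ Bss]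
    [MeasurableSpace Bss]
    (ιs : Bss →ₗ[ℝ] Bs)
    (hιs_norm : ∀ h : Bss, ‖ιs h‖ ≤ ‖h‖)
    (Lss : Ω → ℝ → (Bss →L[ℝ] Bss))
    (hcompat_ss : ∀ (ω : Ω) (ε : ℝ) (h : Bss), ιs (Lss ω ε h) = L ω ε (ιs h))
    (h1x : ∀ ε ∈ I, ∀ ω ∈ Ω', ∀ n : ℕ, ∀ h : Bss,
      ‖iterOp σ Lss ε n ω h‖ ≤ C * lam1 ^ n * ‖h‖ + C * ‖ιs h‖)
    (h2x : ∀ ε ∈ I, ∀ ω ∈ Ω', ∀ h : Bss,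
      ‖L ω ε (ιs h) - L ω 0 (ιs h)‖ ≤ C * |ε| * ‖h‖)
    (ε₀ D' lam' : ℝ) (hε₀ : 0 < ε₀) (hD' : 0 < D') (hlam' : 0 < lam')
    (hdec'ss : ∀ ε ∈ I, |ε| ≤ ε₀ → ∀ ω ∈ Ω', ∀ n : ℕ, ∀ h : Bss, ψ (ιw (ιs h)) = 0 →
      ‖iterOp σ Lss ε n ω h‖ ≤ D' * Real.exp (-lam' * n) * ‖h‖)
    (h3x : ∀ ω ∈ Ω', ∀ n : ℕ, ∀ h : Bw, ψ h = 0 →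
      ‖iterOp σ Lw 0 n ω h‖ ≤ D' * Real.exp (-lam' * n) * ‖h‖)
    (Lhat : Ω → (Bss →L[ℝ] Bs)) (Lhatw : Ω → (Bs →L[ℝ] Bw))
    (hLhat_compat : ∀ ω ∈ Ω', ∀ h : Bss, Lhatw ω (ιs h) = ιw (Lhat ω h))
    (hqx : ∃ K : ℝ, ∀ ω ∈ Ω', ‖Lhat ω‖ ≤ K ∧ ‖Lhatw ω‖ ≤ K)
    (α : ℝ → ℝ) (hα_nonneg : ∀ ε ∈ I, 0 ≤ α ε)
    (hα_lim : Tendsto α (nhdsWithin 0 (I \ {0})) (nhds 0))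
    (hlim : ∀ ε ∈ I, ε ≠ 0 → ∀ ω ∈ Ω', ∀ h : Bss,
      ‖(1 / ε) • (ιw (L ω ε (ιs h)) - ιw (L ω 0 (ιs h))) - ιw (Lhat ω h)‖ ≤ α ε * ‖h‖)
    (hfun : ℝ → Ω → Bss)
    (hfam : ∀ ε ∈ I, |ε| ≤ ε₀ →
      Measurable (hfun ε) ∧ (∃ M : ℝ, ∀ ω ∈ Ω', ‖hfun ε ω‖ ≤ M) ∧
      (∀ ω ∈ Ω', ψ (ιw (ιs (hfun ε ω))) = 1) ∧
      (∀ ω ∈ Ω', Lss ω ε (hfun ε ω) = hfun ε (σ ω)))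
    :
    ∀ δ > (0 : ℝ), ∃ η > (0 : ℝ), ∀ ε ∈ I, ε ≠ 0 → |ε| ≤ η → ∀ ω ∈ Ω',
      ‖(1 / ε) • (ιw (ιs (hfun ε ω)) - ιw (ιs (hfun 0 ω))) -
        ιw (∑' j : ℕ,
          iterOp σ L 0 j (σinv^[j] ω)
            (Lhat (σinv^[j + 1] ω) (hfun 0 (σinv^[j + 1] ω))))‖ ≤ δ := by

  intro δ hδ
  have h0I : (0 : ℝ) ∈ I := mem_of_mem_nhds hI
  have h0ε₀ : |(0 : ℝ)| ≤ ε₀ := by simpa using hε₀.le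
  have hS : Set.MapsTo σinv Ω' Ω' := fun ω hω => (hΩ'inv _).2 (by rwa [hσinv₂ ω])
  simp only [Real.exp_neg_mul_nat] at hdec hdec'ss h3x
  set r := Real.exp (-lam)
  set r' := Real.exp (-lam')
  obtain ⟨hr0, hr1⟩ : 0 ≤ r ∧ r < 1 :=
    ⟨(Real.exp_pos _).le, Real.exp_lt_one_iff.2 (neg_neg_of_pos hlam)⟩
  obtain ⟨hr'0, hr'1⟩ : 0 ≤ r' ∧ r' < 1 :=
    ⟨(Real.exp_pos _).le, Real.exp_lt_one_iff.2 (neg_neg_of_pos hlam')⟩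
  set φs : Bs →ₗ[ℝ] ℝ := (ψ : Bw →ₗ[ℝ] ℝ) ∘ₗ ιw
  have hφ : ∀ ε ∈ I, |ε| ≤ ε₀ → ∀ ω ∈ Ω', φs (ιs (hfun ε ω)) = φs (ιs (hfun 0 ω)) :=
    fun ε hε hε' ω hω => ((hfam ε hε hε').2.2.1 ω hω).trans ((hfam 0 h0I h0ε₀).2.2.1 ω hω).symm
  have hφpert : ∀ ε ∈ I, ∀ ω ∈ Ω', ∀ h, φs ((L ω ε - L ω 0) h) = 0 := fun ε hε ω hω h => by
    rw [sub_apply, map_sub, sub_eq_zero]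
    exact (h4 ε hε ω hω h).trans (h4 0 h0I ω hω h).symm
  obtain ⟨M₀, hM₀⟩ := (hfam 0 h0I h0ε₀).2.1
  set Mss := 2 * C * M₀
  have hMss : ∀ ε ∈ I, |ε| ≤ ε₀ → ∀ ω ∈ Ω', ‖hfun ε ω‖ ≤ Mss := by
    intro ε hε hε' ω hω
    obtain ⟨M, hM⟩ := (hfam ε hε hε').2.1
    refine norm_le_of_iterOp_bounded hσinv₂ hS (φs ∘ₗ ιs) hD'.le hr'0 hr'1 (hdec'ss ε hε hε')
      (hfam ε hε hε').2.2.2 (hφ ε hε hε') (fun x hx => norm_sub_le_of_le (hM x hx) (hM₀ x hx))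
      (fun x hx n => ?_) hω
    calc _ ≤ C * lam1 ^ n * ‖hfun 0 x‖ + C * ‖ιs (hfun 0 x)‖ := h1x ε hε x hx n _
      _ ≤ C * 1 * M₀ + C * M₀ := by
        gcongr
        · exact pow_le_one₀ hlam1.1.le hlam1.2.le
        · exact hM₀ x hx
        · exact (hιs_norm _).trans (hM₀ x hx)
      _ = Mss := by ring
  have : (𝓝[I \ {0}] (0 : ℝ)).NeBot := by
    rw [Set.sdiff_eq, nhdsWithin_inter_of_mem (mem_nhdsWithin_of_mem_nhds hI)]
    infer_instance
  have hψLhat : ∀ ω ∈ Ω', ∀ h : Bss, ψ (ιw (Lhat ω h)) = 0 := fun ω hω h =>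
    ψ.map_eq_zero_of_norm_sub_le hα_lim
      (eventually_mem_nhdsWithin.mono fun ε hε => by
        rw [map_smul, map_sub, h4 ε hε.1 ω hω, h4 0 h0I ω hω, sub_self, smul_zero])
      (eventually_mem_nhdsWithin.mono fun ε hε => hlim ε hε.1 hε.2 ω hω h)
  obtain ⟨K, hK⟩ := hqx
  set Ks := D * (C * Mss) * (1 - r)⁻¹
  obtain ⟨η, hη, hβη⟩ := exists_pos_forall_mul_add_mul_abs_le hα_lim
    (D' * Mss * (1 - r')⁻¹) (D' * K * Ks * (1 - r')⁻¹) hδ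
  refine ⟨min η ε₀, lt_min hη hε₀, fun ε hε hε0 hεη ω hω => ?_⟩
  have hε' : |ε| ≤ ε₀ := hεη.trans (min_le_right _ _)
  refine le_trans ?_ ((by ring : D' * (α ε * Mss + K * (Ks * |ε|)) * (1 - r')⁻¹ = _).trans_le
    (hβη ε ⟨hε, hε0⟩ (hεη.trans (min_le_left _ _))))
  have hequivS : ∀ e ∈ I, |e| ≤ ε₀ → ∀ x ∈ Ω', L x e (ιs (hfun e x)) = ιs (hfun e (σ x)) :=
    fun e he he' x hx => by rw [← hcompat_ss, (hfam e he he').2.2.2 x hx]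
  have hpert : ∀ x ∈ Ω', ‖(L x ε - L x 0) (ιs (hfun ε x))‖ ≤ C * |ε| * Mss :=
    fun x hx => (h2x ε hε x hx _).trans (by gcongr; exact hMss ε hε hε' x hx)
  have hseries : ∀ x ∈ Ω', HasSum (fun j => iterOp σ L 0 j (σinv^[j] x)
      ((L (σinv^[j + 1] x) ε - L (σinv^[j + 1] x) 0) (ιs (hfun ε (σinv^[j + 1] x)))))
      (ιs (hfun ε x) - ιs (hfun 0 x)) :=
    fun x hx => hasSum_iterOp_perturbation hσinv₂ hS φs hD.le hr0 hr1 hdec (hφpert ε hε)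
      (hequivS ε hε hε') (hequivS 0 h0I h0ε₀) (hφ ε hε hε')
      (fun y hy => norm_sub_le_of_le ((hιs_norm _).trans (hMss ε hε hε' y hy))
        ((hιs_norm _).trans (hMss 0 h0I h0ε₀ y hy))) hpert hx
  have hdiff : ∀ x ∈ Ω', ‖ιs (hfun ε x) - ιs (hfun 0 x)‖ ≤ Ks * |ε| := fun x hx =>
    calc _ ≤ D * (C * |ε| * Mss) * (1 - r)⁻¹ := (hseries x hx).norm_le_of_bounded
          ((hasSum_geometric_of_lt_one hr0 hr1).mul_left _)
          (norm_iterOp_iterate_le hS φs hD.le hr0 hdec (hφpert ε hε · · _) hpert hx)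
      _ = Ks * |ε| := by ring
  have hLhat := summable_iterOp_iterate hS φs hD.le hr0 hr1 hdec (hψLhat · · _)
    (fun x hx => (Lhat x).le_of_opNorm_le_of_le (hK x hx).1 (hMss 0 h0I h0ε₀ x hx)) hω
  set J : Bs →L[ℝ] Bw := ιw.mkContinuous 1 fun h => by simpa using hιw_norm h
  have := norm_smul_sub_tsum_iterOp_le J hcompat (ψ : Bw →ₗ[ℝ] ℝ) hD'.le hr'0 hr'1
    (fun n h hh => h3x _ (hS.iterate n hω) n h hh) (hseries ω hω) hLhat (1 / ε)
    (fun j => ?_) (fun j => norm_smul_sub_map_le_add ιs ιw _ _ _ _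
      (hLhat_compat _ (hS.iterate (j + 1) hω)) (1 / ε)
      ((hlim ε hε hε0 _ (hS.iterate (j + 1) hω) _).trans (mul_le_mul_of_nonneg_left
        (hMss ε hε hε' _ (hS.iterate (j + 1) hω)) (hα_nonneg ε hε)))
      (hK _ (hS.iterate (j + 1) hω)).2 (hdiff _ (hS.iterate (j + 1) hω)))
  · simpa [J] using this
  · have hx := hS.iterate (j + 1) hω
    simp only [ContinuousLinearMap.coe_coe, map_sub, map_smul, J, LinearMap.mkContinuous_apply,
      sub_apply, hψLhat _ hx, h4 ε hε _ hx, h4 0 h0I _ hx, sub_self, smul_zero]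

theorem stmt_14
    {Ω : Type*} [MeasurableSpace Ω] (P : Measure Ω) [IsProbabilityMeasure P]
    (σ σinv : Ω → Ω)
    (hσinv₁ : Function.LeftInverse σinv σ) (hσinv₂ : Function.RightInverse σinv σ)
    (hσinvmeas : Measurable σinv)
    (hσerg : Ergodic σ P)
    {Bs Bw : Type*}
    [NormedAddCommGroup Bs] [NormedSpace ℝ Bs] [CompleteSpace Bs]
    [NormedAddCommGroup Bw] [NormedSpace ℝ Bw] [CompleteSpace Bw]
    [MeasurableSpace Bs] [BorelSpace Bs]
    (ιw : Bs →ₗ[ℝ] Bw) (hιw_inj : Function.Injective ιw)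
    (hιw_norm : ∀ h : Bs, ‖ιw h‖ ≤ ‖h‖)
    (ψ : Bw →L[ℝ] ℝ) (hψ_ne : ∃ g : Bs, ψ (ιw g) ≠ 0)
    (I : Set ℝ) (hI : I ∈ nhds (0 : ℝ))
    (L : Ω → ℝ → (Bs →L[ℝ] Bs)) (Lw : Ω → ℝ → (Bw →L[ℝ] Bw))
    (hcompat : ∀ (ω : Ω) (ε : ℝ) (h : Bs), ιw (L ω ε h) = Lw ω ε (ιw h))
    (hmeas : ∀ ε ∈ I, ∀ h : Bs, Measurable fun ω => L ω ε h)
    (D lam C lam1 : ℝ) (hD : 0 < D) (hlam : 0 < lam) (hC : 0 < C)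
    (hlam1 : lam1 ∈ Set.Ioo (0 : ℝ) 1)
    (Ω' : Set Ω) (hΩ'meas : MeasurableSet Ω') (hΩ'full : P Ω' = 1)
    (hΩ'inv : ∀ ω, ω ∈ Ω' ↔ σ ω ∈ Ω')
    (hdec : ∀ ω ∈ Ω', ∀ n : ℕ, ∀ h : Bs, ψ (ιw h) = 0 →
      ‖iterOp σ L 0 n ω h‖ ≤ D * Real.exp (-lam * n) * ‖h‖)
    (h1 : ∀ ε ∈ I, ∀ ω ∈ Ω', ∀ n : ℕ, ∀ h : Bs,
      ‖iterOp σ L ε n ω h‖ ≤ C * lam1 ^ n * ‖h‖ + C * ‖ιw h‖)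
    (h2 : ∀ ε ∈ I, ∀ ω ∈ Ω', ∀ h : Bs,
      ‖ιw (L ω ε h) - ιw (L ω 0 h)‖ ≤ C * |ε| * ‖h‖)
    (h3 : ∀ ε ∈ I, ∀ ω ∈ Ω', ∀ n : ℕ, ‖iterOp σ Lw ε n ω‖ ≤ C)
    (h4 : ∀ ε ∈ I, ∀ ω ∈ Ω', ∀ h : Bs, ψ (ιw (L ω ε h)) = ψ (ιw h))
    {Bss : Type*} [NormedAddCommGroup Bss] [NormedSpace ℝ Bss] [CompleteSpace Bss]
    [MeasurableSpace Bss] [BorelSpace Bss]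
    (ιs : Bss →ₗ[ℝ] Bs) (hιs_inj : Function.Injective ιs)
    (hιs_norm : ∀ h : Bss, ‖ιs h‖ ≤ ‖h‖)
    (Lss : Ω → ℝ → (Bss →L[ℝ] Bss))
    (hcompat_ss : ∀ (ω : Ω) (ε : ℝ) (h : Bss), ιs (Lss ω ε h) = L ω ε (ιs h))
    (hmeas_ss : ∀ ε ∈ I, ∀ h : Bss, Measurable fun ω => Lss ω ε h)
    (h1011 : ∀ ω ∈ Ω', ∀ n : ℕ, ∀ h : Bss, ψ (ιw (ιs h)) = 0 →
      ‖iterOp σ Lss 0 n ω h‖ ≤ D * Real.exp (-lam * n) * ‖h‖)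
    (h1x : ∀ ε ∈ I, ∀ ω ∈ Ω', ∀ n : ℕ, ∀ h : Bss,
      ‖iterOp σ Lss ε n ω h‖ ≤ C * lam1 ^ n * ‖h‖ + C * ‖ιs h‖)
    (h2x : ∀ ε ∈ I, ∀ ω ∈ Ω', ∀ h : Bss,
      ‖L ω ε (ιs h) - L ω 0 (ιs h)‖ ≤ C * |ε| * ‖h‖)
    (ε₀ D' lam' : ℝ) (hε₀ : 0 < ε₀) (hD' : 0 < D') (hlam' : 0 < lam')
    (hdec'ss : ∀ ε ∈ I, |ε| ≤ ε₀ → ∀ ω ∈ Ω', ∀ n : ℕ, ∀ h : Bss, ψ (ιw (ιs h)) = 0 →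
      ‖iterOp σ Lss ε n ω h‖ ≤ D' * Real.exp (-lam' * n) * ‖h‖)
    (hdec's : ∀ ε ∈ I, |ε| ≤ ε₀ → ∀ ω ∈ Ω', ∀ n : ℕ, ∀ h : Bs, ψ (ιw h) = 0 →
      ‖iterOp σ L ε n ω h‖ ≤ D' * Real.exp (-lam' * n) * ‖h‖)
    (h3x : ∀ ω ∈ Ω', ∀ n : ℕ, ∀ h : Bw, ψ h = 0 →
      ‖iterOp σ Lw 0 n ω h‖ ≤ D' * Real.exp (-lam' * n) * ‖h‖)
    (Lhat : Ω → (Bss →L[ℝ] Bs)) (Lhatw : Ω → (Bs →L[ℝ] Bw))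
    (hLhat_compat : ∀ ω ∈ Ω', ∀ h : Bss, Lhatw ω (ιs h) = ιw (Lhat ω h))
    (hqx : ∃ K : ℝ, ∀ ω ∈ Ω', ‖Lhat ω‖ ≤ K ∧ ‖Lhatw ω‖ ≤ K)
    (α : ℝ → ℝ) (hα_nonneg : ∀ ε ∈ I, 0 ≤ α ε)
    (hα_lim : Tendsto α (nhdsWithin 0 (I \ {0})) (nhds 0))
    (hlim : ∀ ε ∈ I, ε ≠ 0 → ∀ ω ∈ Ω', ∀ h : Bss,
      ‖(1 / ε) • (ιw (L ω ε (ιs h)) - ιw (L ω 0 (ιs h))) - ιw (Lhat ω h)‖ ≤ α ε * ‖h‖)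
    (hfun : ℝ → Ω → Bss)
    (hfam : ∀ ε ∈ I, |ε| ≤ ε₀ →
      Measurable (hfun ε) ∧ (∃ M : ℝ, ∀ ω ∈ Ω', ‖hfun ε ω‖ ≤ M) ∧
      (∀ ω ∈ Ω', ψ (ιw (ιs (hfun ε ω))) = 1) ∧
      (∀ ω ∈ Ω', Lss ω ε (hfun ε ω) = hfun ε (σ ω)))
    :
    ∀ δ > (0 : ℝ), ∃ η > (0 : ℝ), ∀ ε ∈ I, ε ≠ 0 → |ε| ≤ η → ∀ ω ∈ Ω',
      ‖(1 / ε) • (ιw (ιs (hfun ε ω)) - ιw (ιs (hfun 0 ω))) -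
        ιw (∑' j : ℕ,
          iterOp σ L 0 j (σinv^[j] ω)
            (Lhat (σinv^[j + 1] ω) (hfun 0 (σinv^[j + 1] ω))))‖ ≤ δ :=
  stmt_14_general σ σinv hσinv₂ ιw hιw_norm ψ I hI L Lw hcompat D lam C lam1 hD hlam hC hlam1 Ω'
    hΩ'inv hdec h4 ιs hιs_norm Lss hcompat_ss h1x h2x ε₀ D' lam' hε₀ hD' hlam' hdec'ss h3x Lhat
    Lhatw hLhat_compat hqx α hα_nonneg hα_lim hlim hfun hfam
end
end

section
/- There exists a constant D̃ > 0, independent of ω and ε, such that for every ε ∈ I ∖ {0} with |ε| ≤ ε₀ and every ω ∈ Ω', ‖ Σ_{j=0}^∞ L_{σ^{−j}ω}^j ( (1/ε)(L_{σ^{−(j+1)}ω,ε} − L_{σ^{−(j+1)}ω}) − L̂_{σ^{−(j+1)}ω} ) h_{σ^{−(j+1)}ω}^ε ‖_w ≤ D̃ α(ε) · sup_{|ε'|≤ε₀} sup_{ω'∈Ω'} ‖h_{ω'}^{ε'}‖_ss. -/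
/-!
Every summand lies in `ker ψ`: since `ψ ∘ L_{ω,ε} = ψ`, the functional `ψ` kills each difference
quotient `(L_{ω,ε} - L_ω) h / ε`, hence also their limit `L̂_ω h`. On `ker ψ` the unperturbed
cocycle contracts exponentially on `B_w` (3x), while (lim) bounds the `j`-th summand's argument by
`α ε * M`. The series is thus dominated by a geometric one, with sum `D' / (1 - e^{-λ'}) * α ε * M`.
-/

open MeasureTheory Filter Topology

noncomputable section

lemma neBot_nhdsWithin_diff_singleton {X : Type*} [TopologicalSpace X] {s : Set X} {a : X}
    [(𝓝[≠] a).NeBot] (hs : s ∈ 𝓝 a) : (𝓝[s \ {a}] a).NeBot := by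
  rwa [Set.sdiff_eq, Set.inter_comm, nhdsWithin_inter_of_mem' (mem_nhdsWithin_of_mem_nhds hs)]

lemma ContinuousLinearMap.map_eq_zero_of_approx {ι E : Type*} [SeminormedAddCommGroup E]
    [NormedSpace ℝ E] {l : Filter ι} [l.NeBot] (ψ : E →L[ℝ] ℝ) {f : ι → E} {x : E}
    {g : ι → ℝ} (hg : Tendsto g l (𝓝 0)) (hfx : ∀ᶠ i in l, ‖f i - x‖ ≤ g i)
    (hψ : ∀ᶠ i in l, ψ (f i) = 0) : ψ x = 0 := by
  have hf : Tendsto f l (𝓝 x) := tendsto_iff_norm_sub_tendsto_zero.2 <|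
    squeeze_zero' (.of_forall fun _ => norm_nonneg _) hfx hg
  exact tendsto_nhds_unique ((ψ.continuous.tendsto x).comp hf)
    (tendsto_const_nhds.congr' (hψ.mono fun _ h => h.symm))

lemma summable_norm_and_norm_tsum_le_of_exp_decay {E : Type*} [SeminormedAddCommGroup E]
    {u : ℕ → E} {D lam c : ℝ} (hlam : 0 < lam)
    (hu : ∀ j : ℕ, ‖u j‖ ≤ D * Real.exp (-lam * j) * c) :
    Summable (fun j => ‖u j‖) ∧ ‖∑' j, u j‖ ≤ D / (1 - Real.exp (-lam)) * c := by
  set r := Real.exp (-lam)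
  have hr0 : 0 ≤ r := Real.exp_nonneg _
  have hr1 : r < 1 := Real.exp_lt_one_iff.2 (by linarith)
  have hu' : ∀ j : ℕ, ‖u j‖ ≤ D * c * r ^ j := fun j => by
    simpa only [r, ← Real.exp_nat_mul, mul_neg, mul_comm (j : ℝ), mul_right_comm D] using hu j
  have hgeom : Summable (fun j : ℕ => D * c * r ^ j) :=
    (summable_geometric_of_lt_one hr0 hr1).mul_left _
  have hsum : Summable (fun j => ‖u j‖) := .of_nonneg_of_le (fun _ => norm_nonneg _) hu' hgeom
  refine ⟨hsum, ?_⟩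
  calc ‖∑' j, u j‖ ≤ ∑' j, ‖u j‖ := norm_tsum_le_tsum_norm hsum
    _ ≤ ∑' j : ℕ, D * c * r ^ j := hsum.tsum_le_tsum hu' hgeom
    _ = D / (1 - r) * c := by
      rw [tsum_mul_left, tsum_geometric_of_lt_one hr0 hr1]; ring

theorem stmt_15_general
    {Ω : Type*}
    (σ σinv : Ω → Ω)
    (hσinv₂ : Function.RightInverse σinv σ)
    {Bs Bw : Type*}
    [NormedAddCommGroup Bs] [NormedSpace ℝ Bs]
    [NormedAddCommGroup Bw] [NormedSpace ℝ Bw]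
    (ιw : Bs →ₗ[ℝ] Bw)
    (ψ : Bw →L[ℝ] ℝ)
    (I : Set ℝ) (hI : I ∈ nhds (0 : ℝ))
    (L : Ω → ℝ → (Bs →L[ℝ] Bs)) (Lw : Ω → ℝ → (Bw →L[ℝ] Bw))
    (Ω' : Set Ω)
    (hΩ'inv : ∀ ω, ω ∈ Ω' ↔ σ ω ∈ Ω')
    (h4 : ∀ ε ∈ I, ∀ ω ∈ Ω', ∀ h : Bs, ψ (ιw (L ω ε h)) = ψ (ιw h))
    {Bss : Type*} [NormedAddCommGroup Bss] [NormedSpace ℝ Bss]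
    (ιs : Bss →ₗ[ℝ] Bs)
    (ε₀ D' lam' : ℝ) (hD' : 0 < D') (hlam' : 0 < lam')
    (h3x : ∀ ω ∈ Ω', ∀ n : ℕ, ∀ h : Bw, ψ h = 0 →
      ‖iterOp σ Lw 0 n ω h‖ ≤ D' * Real.exp (-lam' * n) * ‖h‖)
    (Lhat : Ω → (Bss →L[ℝ] Bs))
    (α : ℝ → ℝ) (hα_nonneg : ∀ ε ∈ I, 0 ≤ α ε)
    (hα_lim : Tendsto α (nhdsWithin 0 (I \ {0})) (nhds 0))
    (hlim : ∀ ε ∈ I, ε ≠ 0 → ∀ ω ∈ Ω', ∀ h : Bss,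
      ‖(1 / ε) • (ιw (L ω ε (ιs h)) - ιw (L ω 0 (ιs h))) - ιw (Lhat ω h)‖ ≤ α ε * ‖h‖)
    (hfun : ℝ → Ω → Bss)
    :
    ∃ Dt > (0 : ℝ), ∀ M : ℝ,
      (∀ ε' ∈ I, |ε'| ≤ ε₀ → ∀ ω' ∈ Ω', ‖hfun ε' ω'‖ ≤ M) →
      ∀ ε ∈ I, ε ≠ 0 → |ε| ≤ ε₀ → ∀ ω ∈ Ω',
        Summable (fun j : ℕ =>
          ‖iterOp σ Lw 0 j (σinv^[j] ω)
            ((1 / ε) • (ιw (L (σinv^[j + 1] ω) ε (ιs (hfun ε (σinv^[j + 1] ω)))) -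
                ιw (L (σinv^[j + 1] ω) 0 (ιs (hfun ε (σinv^[j + 1] ω))))) -
              ιw (Lhat (σinv^[j + 1] ω) (hfun ε (σinv^[j + 1] ω))))‖) ∧
        ‖∑' j : ℕ,
          iterOp σ Lw 0 j (σinv^[j] ω)
            ((1 / ε) • (ιw (L (σinv^[j + 1] ω) ε (ιs (hfun ε (σinv^[j + 1] ω)))) -
                ιw (L (σinv^[j + 1] ω) 0 (ιs (hfun ε (σinv^[j + 1] ω))))) -
              ιw (Lhat (σinv^[j + 1] ω) (hfun ε (σinv^[j + 1] ω))))‖ ≤ Dt * α ε * M := by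
  have hσinv_mapsTo : Set.MapsTo σinv Ω' Ω' := fun ω hω => (hΩ'inv _).2 (by rwa [hσinv₂])
  have hψ_quotient : ∀ ε ∈ I, ∀ ω ∈ Ω', ∀ h : Bs,
      ψ ((1 / ε) • (ιw (L ω ε h) - ιw (L ω 0 h))) = 0 := fun ε hε ω hω h => by
    rw [map_smul, map_sub, h4 ε hε ω hω, h4 0 (mem_of_mem_nhds hI) ω hω, sub_self, smul_zero]
  have hψ_Lhat : ∀ ω ∈ Ω', ∀ h : Bss, ψ (ιw (Lhat ω h)) = 0 := fun ω hω h => by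
    have := neBot_nhdsWithin_diff_singleton hI
    refine ψ.map_eq_zero_of_approx
      (f := fun ε => (1 / ε) • (ιw (L ω ε (ιs h)) - ιw (L ω 0 (ιs h)))) (g := fun ε => α ε * ‖h‖)
      (by simpa using hα_lim.mul_const ‖h‖) ?_ ?_ <;>
    filter_upwards [self_mem_nhdsWithin] with ε ⟨hεI, hε0⟩
    exacts [hlim ε hεI hε0 ω hω h, hψ_quotient ε hεI ω hω _]
  refine ⟨D' / (1 - Real.exp (-lam')),
    div_pos hD' (sub_pos.2 (Real.exp_lt_one_iff.2 (neg_neg_of_pos hlam'))), ?_⟩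
  intro M hM ε hεI hε0 hεε₀ ω hω
  rw [mul_assoc]
  refine summable_norm_and_norm_tsum_le_of_exp_decay hlam' fun j => ?_
  have hωj : σinv^[j + 1] ω ∈ Ω' := hσinv_mapsTo.iterate _ hω
  refine (h3x _ (hσinv_mapsTo.iterate j hω) j _ ?_).trans ?_
  · rw [map_sub, hψ_quotient ε hεI _ hωj, hψ_Lhat _ hωj, sub_zero]
  · gcongr
    exact (hlim ε hεI hε0 _ hωj _).trans
      (mul_le_mul_of_nonneg_left (hM ε hεI hεε₀ _ hωj) (hα_nonneg ε hεI))

theorem stmt_15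
    {Ω : Type*} [MeasurableSpace Ω] (P : Measure Ω) [IsProbabilityMeasure P]
    (σ σinv : Ω → Ω)
    (hσinv₁ : Function.LeftInverse σinv σ) (hσinv₂ : Function.RightInverse σinv σ)
    (hσinvmeas : Measurable σinv)
    (hσerg : Ergodic σ P)
    {Bs Bw : Type*}
    [NormedAddCommGroup Bs] [NormedSpace ℝ Bs] [CompleteSpace Bs]
    [NormedAddCommGroup Bw] [NormedSpace ℝ Bw] [CompleteSpace Bw]
    [MeasurableSpace Bs] [BorelSpace Bs]
    (ιw : Bs →ₗ[ℝ] Bw) (hιw_inj : Function.Injective ιw)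
    (hιw_norm : ∀ h : Bs, ‖ιw h‖ ≤ ‖h‖)
    (ψ : Bw →L[ℝ] ℝ) (hψ_ne : ∃ g : Bs, ψ (ιw g) ≠ 0)
    (I : Set ℝ) (hI : I ∈ nhds (0 : ℝ))
    (L : Ω → ℝ → (Bs →L[ℝ] Bs)) (Lw : Ω → ℝ → (Bw →L[ℝ] Bw))
    (hcompat : ∀ (ω : Ω) (ε : ℝ) (h : Bs), ιw (L ω ε h) = Lw ω ε (ιw h))
    (hmeas : ∀ ε ∈ I, ∀ h : Bs, Measurable fun ω => L ω ε h)
    (D lam C lam1 : ℝ) (hD : 0 < D) (hlam : 0 < lam) (hC : 0 < C)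
    (hlam1 : lam1 ∈ Set.Ioo (0 : ℝ) 1)
    (Ω' : Set Ω) (hΩ'meas : MeasurableSet Ω') (hΩ'full : P Ω' = 1)
    (hΩ'inv : ∀ ω, ω ∈ Ω' ↔ σ ω ∈ Ω')
    (hdec : ∀ ω ∈ Ω', ∀ n : ℕ, ∀ h : Bs, ψ (ιw h) = 0 →
      ‖iterOp σ L 0 n ω h‖ ≤ D * Real.exp (-lam * n) * ‖h‖)
    (h1 : ∀ ε ∈ I, ∀ ω ∈ Ω', ∀ n : ℕ, ∀ h : Bs,
      ‖iterOp σ L ε n ω h‖ ≤ C * lam1 ^ n * ‖h‖ + C * ‖ιw h‖)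
    (h2 : ∀ ε ∈ I, ∀ ω ∈ Ω', ∀ h : Bs,
      ‖ιw (L ω ε h) - ιw (L ω 0 h)‖ ≤ C * |ε| * ‖h‖)
    (h3 : ∀ ε ∈ I, ∀ ω ∈ Ω', ∀ n : ℕ, ‖iterOp σ Lw ε n ω‖ ≤ C)
    (h4 : ∀ ε ∈ I, ∀ ω ∈ Ω', ∀ h : Bs, ψ (ιw (L ω ε h)) = ψ (ιw h))
    {Bss : Type*} [NormedAddCommGroup Bss] [NormedSpace ℝ Bss] [CompleteSpace Bss]
    [MeasurableSpace Bss] [BorelSpace Bss]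
    (ιs : Bss →ₗ[ℝ] Bs) (hιs_inj : Function.Injective ιs)
    (hιs_norm : ∀ h : Bss, ‖ιs h‖ ≤ ‖h‖)
    (Lss : Ω → ℝ → (Bss →L[ℝ] Bss))
    (hcompat_ss : ∀ (ω : Ω) (ε : ℝ) (h : Bss), ιs (Lss ω ε h) = L ω ε (ιs h))
    (hmeas_ss : ∀ ε ∈ I, ∀ h : Bss, Measurable fun ω => Lss ω ε h)
    (h1011 : ∀ ω ∈ Ω', ∀ n : ℕ, ∀ h : Bss, ψ (ιw (ιs h)) = 0 →
      ‖iterOp σ Lss 0 n ω h‖ ≤ D * Real.exp (-lam * n) * ‖h‖)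
    (h1x : ∀ ε ∈ I, ∀ ω ∈ Ω', ∀ n : ℕ, ∀ h : Bss,
      ‖iterOp σ Lss ε n ω h‖ ≤ C * lam1 ^ n * ‖h‖ + C * ‖ιs h‖)
    (h2x : ∀ ε ∈ I, ∀ ω ∈ Ω', ∀ h : Bss,
      ‖L ω ε (ιs h) - L ω 0 (ιs h)‖ ≤ C * |ε| * ‖h‖)
    (ε₀ D' lam' : ℝ) (hε₀ : 0 < ε₀) (hD' : 0 < D') (hlam' : 0 < lam')
    (hdec'ss : ∀ ε ∈ I, |ε| ≤ ε₀ → ∀ ω ∈ Ω', ∀ n : ℕ, ∀ h : Bss, ψ (ιw (ιs h)) = 0 →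
      ‖iterOp σ Lss ε n ω h‖ ≤ D' * Real.exp (-lam' * n) * ‖h‖)
    (hdec's : ∀ ε ∈ I, |ε| ≤ ε₀ → ∀ ω ∈ Ω', ∀ n : ℕ, ∀ h : Bs, ψ (ιw h) = 0 →
      ‖iterOp σ L ε n ω h‖ ≤ D' * Real.exp (-lam' * n) * ‖h‖)
    (h3x : ∀ ω ∈ Ω', ∀ n : ℕ, ∀ h : Bw, ψ h = 0 →
      ‖iterOp σ Lw 0 n ω h‖ ≤ D' * Real.exp (-lam' * n) * ‖h‖)
    (Lhat : Ω → (Bss →L[ℝ] Bs)) (Lhatw : Ω → (Bs →L[ℝ] Bw))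
    (hLhat_compat : ∀ ω ∈ Ω', ∀ h : Bss, Lhatw ω (ιs h) = ιw (Lhat ω h))
    (hqx : ∃ K : ℝ, ∀ ω ∈ Ω', ‖Lhat ω‖ ≤ K ∧ ‖Lhatw ω‖ ≤ K)
    (α : ℝ → ℝ) (hα_nonneg : ∀ ε ∈ I, 0 ≤ α ε)
    (hα_lim : Tendsto α (nhdsWithin 0 (I \ {0})) (nhds 0))
    (hlim : ∀ ε ∈ I, ε ≠ 0 → ∀ ω ∈ Ω', ∀ h : Bss,
      ‖(1 / ε) • (ιw (L ω ε (ιs h)) - ιw (L ω 0 (ιs h))) - ιw (Lhat ω h)‖ ≤ α ε * ‖h‖)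
    (hfun : ℝ → Ω → Bss)
    (hfam : ∀ ε ∈ I, |ε| ≤ ε₀ →
      Measurable (hfun ε) ∧ (∃ M : ℝ, ∀ ω ∈ Ω', ‖hfun ε ω‖ ≤ M) ∧
      (∀ ω ∈ Ω', ψ (ιw (ιs (hfun ε ω))) = 1) ∧
      (∀ ω ∈ Ω', Lss ω ε (hfun ε ω) = hfun ε (σ ω)))
    :
    ∃ Dt > (0 : ℝ), ∀ M : ℝ,
      (∀ ε' ∈ I, |ε'| ≤ ε₀ → ∀ ω' ∈ Ω', ‖hfun ε' ω'‖ ≤ M) →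
      ∀ ε ∈ I, ε ≠ 0 → |ε| ≤ ε₀ → ∀ ω ∈ Ω',
        Summable (fun j : ℕ =>
          ‖iterOp σ Lw 0 j (σinv^[j] ω)
            ((1 / ε) • (ιw (L (σinv^[j + 1] ω) ε (ιs (hfun ε (σinv^[j + 1] ω)))) -
                ιw (L (σinv^[j + 1] ω) 0 (ιs (hfun ε (σinv^[j + 1] ω))))) -
              ιw (Lhat (σinv^[j + 1] ω) (hfun ε (σinv^[j + 1] ω))))‖) ∧
        ‖∑' j : ℕ,
          iterOp σ Lw 0 j (σinv^[j] ω)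
            ((1 / ε) • (ιw (L (σinv^[j + 1] ω) ε (ιs (hfun ε (σinv^[j + 1] ω)))) -
                ιw (L (σinv^[j + 1] ω) 0 (ιs (hfun ε (σinv^[j + 1] ω))))) -
              ιw (Lhat (σinv^[j + 1] ω) (hfun ε (σinv^[j + 1] ω))))‖ ≤ Dt * α ε * M :=
  stmt_15_general σ σinv hσinv₂ ιw ψ I hI L Lw Ω' hΩ'inv h4 ιs ε₀ D' lam' hD' hlam' h3x Lhat α
    hα_nonneg hα_lim hlim hfun
end
end
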